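/- arXiv:1605.03533 — 10 statements merged into one kernel-verified Lean document; each statement's English description precedes it below -/
import Mathlib

section
/- If G is a graph with m edges and exactly two distinct main eigenvalues λ₁ (the largest eigenvalue) and λᵢ, then λᵢ = (Σ_{v∈V(G)} d_v² − 2m·λ₁) / (2m − n·λ₁), where n is the order of G and d_v is the degree of vertex v. -/
open Matrix Finset Polynomial

variable {V : Type*} [Fintype V] [DecidableEq V]

/-- `μ` is an eigenvalue of the adjacency matrix of `G`. -/
def SimpleGraph.IsEigenvalue (G : SimpleGraph V) [DecidableRel G.Adj] (μ : ℝ) : Prop :=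
  ∃ x : V → ℝ, x ≠ 0 ∧ (G.adjMatrix ℝ) *ᵥ x = μ • x

/-- `μ` is a main eigenvalue: some associated eigenvector is not orthogonal
to the all-ones vector. -/
def SimpleGraph.IsMainEigenvalue (G : SimpleGraph V) [DecidableRel G.Adj] (μ : ℝ) : Prop :=
  ∃ x : V → ℝ, x ≠ 0 ∧ (G.adjMatrix ℝ) *ᵥ x = μ • x ∧ ∑ v, x v ≠ 0

/-- `μ` is a non-main eigenvalue: it is an eigenvalue whose eigenspace is
orthogonal to the all-ones vector. -/
def SimpleGraph.IsNonMainEigenvalue (G : SimpleGraph V) [DecidableRel G.Adj] (μ : ℝ) : Prop :=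
  G.IsEigenvalue μ ∧ ¬ G.IsMainEigenvalue μ

/-- The multiplicity of `μ` as an eigenvalue of `G` (as a root of the
characteristic polynomial of the adjacency matrix). -/
noncomputable def SimpleGraph.eigMult (G : SimpleGraph V) [DecidableRel G.Adj] (μ : ℝ) : ℕ :=
  ((G.adjMatrix ℝ).charpoly).rootMultiplicity μ

/-- `G` is harmonic: its degree vector is an eigenvector of the adjacency matrix
associated with a positive integer eigenvalue. -/
def SimpleGraph.IsHarmonic (G : SimpleGraph V) [DecidableRel G.Adj] : Prop :=
  ∃ ℓ : ℕ, 0 < ℓ ∧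
    (G.adjMatrix ℝ) *ᵥ (fun v => (G.degree v : ℝ)) = (ℓ : ℝ) • (fun v => (G.degree v : ℝ))

/-!
Let `A` be the adjacency matrix and `j` the all-ones vector. Since every eigenvector not
orthogonal to `j` belongs to `λ₁` or `λᵢ`, expanding `j` in an orthonormal eigenbasis shows that
`u := A j - λ₁ j` satisfies `A u = λᵢ u`. Symmetry of `A` then gives `⟨A j, u⟩ = λᵢ ⟨j, u⟩`,
which is the claimed formula, as `⟨j, j⟩ = n`, `⟨j, A j⟩ = 2m` and `⟨A j, A j⟩ = Σ d_v²`.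
The denominator `⟨j, u⟩` cannot vanish: `‖u‖² = (λᵢ - λ₁) ⟨j, u⟩`, and `u = 0` would make `j` a
`λ₁`-eigenvector, hence orthogonal to every `λᵢ`-eigenvector.
-/

namespace Matrix

variable {n : Type*} [Fintype n] {A : Matrix n n ℝ}

theorem IsHermitian.mulVec_dotProduct (hA : A.IsHermitian) (x y : n → ℝ) :
    (A *ᵥ x) ⬝ᵥ y = x ⬝ᵥ (A *ᵥ y) := by
  rw [dotProduct_mulVec, ← vecMul_transpose, ← conjTranspose_eq_transpose_of_trivial, hA.eq]

theorem IsHermitian.dotProduct_eq_zero_of_mulVec_eq_smul (hA : A.IsHermitian) {x y : n → ℝ}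
    {r s : ℝ} (hx : A *ᵥ x = r • x) (hy : A *ᵥ y = s • y) (hrs : r ≠ s) : x ⬝ᵥ y = 0 := by
  have h : r * (x ⬝ᵥ y) = s * (x ⬝ᵥ y) := by
    rw [← smul_eq_mul, ← smul_dotProduct, ← hx, hA.mulVec_dotProduct, hy, dotProduct_smul,
      smul_eq_mul]
  exact (mul_eq_mul_right_iff.1 h).resolve_left hrs

variable [DecidableEq n]

theorem IsHermitian.eq_zero_of_forall_eigenvectorBasis_dotProduct_eq_zero (hA : A.IsHermitian)
    {v : n → ℝ} (h : ∀ k, ⇑(hA.eigenvectorBasis k) ⬝ᵥ v = 0) : v = 0 := by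
  have hrepr : hA.eigenvectorBasis.repr (WithLp.toLp 2 v) = 0 := by
    ext k
    simp [OrthonormalBasis.repr_apply_apply, EuclideanSpace.inner_eq_star_dotProduct,
      dotProduct_comm v, h]
  simpa using hrepr

theorem IsHermitian.mulVec_mulVec_sub_smul (hA : A.IsHermitian) {j : n → ℝ} {r s : ℝ}
    (hmain : ∀ μ x, A *ᵥ x = μ • x → x ⬝ᵥ j ≠ 0 → μ = r ∨ μ = s) :
    A *ᵥ (A *ᵥ j - r • j) = s • (A *ᵥ j - r • j) := by
  rw [← sub_eq_zero]
  refine hA.eq_zero_of_forall_eigenvectorBasis_dotProduct_eq_zero fun k => ?_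
  set b := ⇑(hA.eigenvectorBasis k)
  set μ := hA.eigenvalues k
  have hb : A *ᵥ b = μ • b := hA.mulVec_eigenvectorBasis k
  have hbA (w : n → ℝ) : b ⬝ᵥ (A *ᵥ w) = μ * (b ⬝ᵥ w) := by
    rw [← hA.mulVec_dotProduct, hb, smul_dotProduct, smul_eq_mul]
  simp only [dotProduct_sub, dotProduct_smul, hbA, smul_eq_mul]
  rcases eq_or_ne (b ⬝ᵥ j) 0 with hbj | hbj
  · simp [hbj]
  · rcases hmain μ b hb hbj with hμ | hμ <;> rw [hμ] <;> ring

theorem IsHermitian.eq_div_of_two_main_eigenvalues (hA : A.IsHermitian) {j x : n → ℝ} {r s : ℝ}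
    (hmain : ∀ μ y, A *ᵥ y = μ • y → y ⬝ᵥ j ≠ 0 → μ = r ∨ μ = s) (hrs : r ≠ s)
    (hx : A *ᵥ x = s • x) (hxj : x ⬝ᵥ j ≠ 0) :
    s = ((A *ᵥ j) ⬝ᵥ (A *ᵥ j) - r * (j ⬝ᵥ (A *ᵥ j))) / (j ⬝ᵥ (A *ᵥ j) - r * (j ⬝ᵥ j)) := by
  set u := A *ᵥ j - r • j with hu_def
  have hu : A *ᵥ u = s • u := hA.mulVec_mulVec_sub_smul hmain
  have hAju : (A *ᵥ j) ⬝ᵥ u = s * (j ⬝ᵥ u) := by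
    rw [hA.mulVec_dotProduct, hu, dotProduct_smul, smul_eq_mul]
  have huu : u ⬝ᵥ u = (s - r) * (j ⬝ᵥ u) := by
    rw [hu_def, sub_dotProduct, ← hu_def, hAju, smul_dotProduct, smul_eq_mul]
    ring
  have hju : j ⬝ᵥ u ≠ 0 := by
    intro h0
    have hAj : A *ᵥ j = r • j :=
      sub_eq_zero.1 (dotProduct_self_eq_zero.1 (by rw [huu, h0, mul_zero]))
    exact hxj (hA.dotProduct_eq_zero_of_mulVec_eq_smul hx hAj hrs.symm)
  simp only [hu_def, dotProduct_sub, dotProduct_smul, smul_eq_mul] at hAju hju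
  rw [dotProduct_comm (A *ᵥ j) j] at hAju
  rw [eq_div_iff hju]
  linarith

end Matrix

theorem SimpleGraph.adjMatrix_mulVec_one {W α : Type*} [Fintype W] [NonAssocSemiring α]
    (G : SimpleGraph W) [DecidableRel G.Adj] : G.adjMatrix α *ᵥ 1 = fun v => (G.degree v : α) := by
  ext v; simp

theorem two_main_eigenvalue_relation_general (G : SimpleGraph V) [DecidableRel G.Adj]
    (n m : ℕ) (hn : Fintype.card V = n) (hm : G.edgeFinset.card = m)
    (lam1 lami : ℝ)
    (hmaini : G.IsMainEigenvalue lami)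
    (hne : lam1 ≠ lami)
    (honly : ∀ μ, G.IsMainEigenvalue μ → μ = lam1 ∨ μ = lami) :
    lami = ((∑ v, (G.degree v : ℝ) ^ 2) - 2 * m * lam1) / (2 * m - n * lam1) := by
  obtain ⟨x, -, hx, hx1⟩ := hmaini
  have hmain : ∀ μ y, G.adjMatrix ℝ *ᵥ y = μ • y → y ⬝ᵥ 1 ≠ 0 → μ = lam1 ∨ μ = lami :=
    fun μ y hy hy1 => honly μ ⟨y, by rintro rfl; simp at hy1, hy, by rwa [dotProduct_one] at hy1⟩
  have key := (G.isHermitian_adjMatrix ℝ).eq_div_of_two_main_eigenvalues hmain hne hx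
    (by rwa [dotProduct_one])
  have hdeg : ∑ v, (G.degree v : ℝ) = 2 * m := by
    exact_mod_cast (G.sum_degrees_eq_twice_card_edges).trans (congrArg _ hm)
  rw [G.adjMatrix_mulVec_one] at key
  simp only [dotProduct, Pi.one_apply, one_mul, ← sq, hdeg, sum_const, card_univ, hn,
    nsmul_eq_mul] at key
  rw [key]
  ring

theorem two_main_eigenvalue_relation (G : SimpleGraph V) [DecidableRel G.Adj]
    (n m : ℕ) (hn : Fintype.card V = n) (hm : G.edgeFinset.card = m)
    (lam1 lami : ℝ)
    (h1 : IsGreatest {μ | G.IsEigenvalue μ} lam1)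
    (hmain1 : G.IsMainEigenvalue lam1) (hmaini : G.IsMainEigenvalue lami)
    (hne : lam1 ≠ lami)
    (honly : ∀ μ, G.IsMainEigenvalue μ → μ = lam1 ∨ μ = lami) :
    lami = ((∑ v, (G.degree v : ℝ) ^ 2) - 2 * m * lam1) / (2 * m - n * lam1) :=
  two_main_eigenvalue_relation_general G n m hn hm lam1 lami hmaini hne honly
end

section
/- If a graph G with m edges has exactly two distinct main eigenvalues λ₁ (the largest) and 0, then λ₁ = (Σ_{v∈V(G)} d_v²)/(2m). -/
/-!
Write `A` for the adjacency matrix and `𝟙` for the all-ones vector, so that `A 𝟙` is the degree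
vector `d`. Expanding `𝟙` in an orthonormal eigenbasis of `A`, only eigenvectors not orthogonal
to `𝟙`, i.e. those of main eigenvalues, occur; hence every polynomial vanishing at the main
eigenvalues `λ₁` and `0` kills `𝟙`, in particular `A (A - λ₁) 𝟙 = 0`. Therefore
`∑ d_v² = ⟨A 𝟙, A 𝟙⟩ = ⟨𝟙, A² 𝟙⟩ = λ₁ ⟨𝟙, A 𝟙⟩ = λ₁ ∑ d_v = 2 m λ₁`, and `m ≠ 0` because a graph
without edges has only the eigenvalue `0`.
-/

open Matrix Finset Polynomial

variable {V : Type*} [Fintype V] [DecidableEq V]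

theorem Matrix.aeval_mulVec_of_mulVec_eq_smul {R n : Type*} [CommRing R] [Fintype n]
    [DecidableEq n] {A : Matrix n n R} {μ : R} {v : n → R} (h : A *ᵥ v = μ • v) (p : R[X]) :
    aeval A p *ᵥ v = p.eval μ • v := by
  induction p using Polynomial.induction_on with
  | C a => simp [Algebra.algebraMap_eq_smul_one, smul_mulVec]
  | add p q hp hq => simp [add_mulVec, hp, hq, add_smul]
  | monomial k a ih =>
    rw [pow_succ, ← mul_assoc, aeval_mul, aeval_X, ← mulVec_mulVec, h, mulVec_smul, ih, smul_smul]
    simp only [eval_mul, eval_pow, eval_C, eval_X]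
    congr 1
    ring

theorem Matrix.IsHermitian.aeval_mulVec_eq_zero {𝕜 n : Type*} [RCLike 𝕜] [Fintype n]
    [DecidableEq n] {A : Matrix n n 𝕜} (hA : A.IsHermitian) {p : 𝕜[X]} {x : n → 𝕜}
    (hp : ∀ μ y, y ≠ 0 → A *ᵥ y = μ • y → x ⬝ᵥ star y ≠ 0 → p.IsRoot μ) :
    aeval A p *ᵥ x = 0 := by
  set b := hA.eigenvectorBasis
  have hx : x = ∑ i, (x ⬝ᵥ star ⇑(b i)) • ⇑(b i) := by
    simpa [EuclideanSpace.inner_eq_star_dotProduct] using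
      congr(WithLp.ofLp $(b.sum_repr' (WithLp.toLp 2 x))).symm
  have hb (i : n) : A *ᵥ ⇑(b i) = (hA.eigenvalues i : 𝕜) • ⇑(b i) := by
    rw [hA.mulVec_eigenvectorBasis, RCLike.real_smul_eq_coe_smul (K := 𝕜)]
  rw [hx, mulVec_sum]
  refine Finset.sum_eq_zero fun i _ => ?_
  rw [mulVec_smul, aeval_mulVec_of_mulVec_eq_smul (hb i)]
  by_cases hi : x ⬝ᵥ star ⇑(b i) = 0
  · simp [hi]
  · have hbi : ⇑(b i) ≠ 0 := fun h0 => hi (by simp [h0])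
    simp [(hp _ _ hbi (hb i) hi).eq_zero]

namespace SimpleGraph

variable (G : SimpleGraph V) [DecidableRel G.Adj]

omit [DecidableEq V] in
theorem adjMatrix_mulVec_one_s1 : G.adjMatrix ℝ *ᵥ 1 = fun v => (G.degree v : ℝ) := by
  ext v
  simp

theorem sum_degree_sq_eq_mul_sum_degree {c : ℝ}
    (h : ∀ μ, G.IsMainEigenvalue μ → μ = c ∨ μ = 0) :
    ∑ v, (G.degree v : ℝ) ^ 2 = c * ∑ v, (G.degree v : ℝ) := by
  have hroots (μ : ℝ) (y : V → ℝ) (hy : y ≠ 0) (hAy : G.adjMatrix ℝ *ᵥ y = μ • y)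
      (hsum : 1 ⬝ᵥ star y ≠ 0) : ((X - C c) * X).IsRoot μ := by
    rcases h μ ⟨y, hy, hAy, by simpa [one_dotProduct] using hsum⟩ with rfl | rfl <;> simp
  have hAA : G.adjMatrix ℝ *ᵥ (G.adjMatrix ℝ *ᵥ 1) = c • G.adjMatrix ℝ *ᵥ 1 := by
    have := (G.isHermitian_adjMatrix ℝ).aeval_mulVec_eq_zero hroots
    rwa [aeval_mul, map_sub, aeval_X, aeval_C, sub_mul, ← Algebra.smul_def, sub_mulVec,
      smul_mulVec, ← mulVec_mulVec, sub_eq_zero] at this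
  calc ∑ v, (G.degree v : ℝ) ^ 2 = (G.adjMatrix ℝ *ᵥ 1) ⬝ᵥ (G.adjMatrix ℝ *ᵥ 1) := by
        simp only [adjMatrix_mulVec_one_s1, dotProduct, sq]
    _ = 1 ⬝ᵥ (G.adjMatrix ℝ *ᵥ (G.adjMatrix ℝ *ᵥ 1)) := by
        rw [dotProduct_mulVec 1, ← mulVec_transpose, G.transpose_adjMatrix, dotProduct_comm]
    _ = c * ∑ v, (G.degree v : ℝ) := by
        rw [hAA, dotProduct_smul, adjMatrix_mulVec_one_s1, one_dotProduct, smul_eq_mul]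

omit [DecidableEq V] in
theorem edgeFinset_nonempty_of_mulVec_eq_smul {μ : ℝ} {x : V → ℝ} (hx : x ≠ 0)
    (hAx : G.adjMatrix ℝ *ᵥ x = μ • x) (hμ : μ ≠ 0) : G.edgeFinset.Nonempty := by
  rw [edgeFinset_nonempty]
  rintro rfl
  have h0 : (⊥ : SimpleGraph V).adjMatrix ℝ = 0 := by
    ext v w
    simp [adjMatrix_apply]
  rw [h0, zero_mulVec, eq_comm, smul_eq_zero] at hAx
  tauto

end SimpleGraph

theorem two_main_eigenvalues_zero_general (G : SimpleGraph V) [DecidableRel G.Adj]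
    (m : ℕ) (hm : G.edgeFinset.card = m)
    (lam1 : ℝ)
    (hmain1 : G.IsMainEigenvalue lam1)
    (hne : lam1 ≠ 0)
    (honly : ∀ μ, G.IsMainEigenvalue μ → μ = lam1 ∨ μ = 0) :
    lam1 = (∑ v, (G.degree v : ℝ) ^ 2) / (2 * m) := by
  obtain ⟨x, hx, hAx, -⟩ := hmain1
  have hm0 : (m : ℝ) ≠ 0 := by
    rw [← hm]
    exact_mod_cast (G.edgeFinset_nonempty_of_mulVec_eq_smul hx hAx hne).card_pos.ne'
  have hsum : ∑ v, (G.degree v : ℝ) = 2 * m := by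
    rw [← hm]
    exact_mod_cast G.sum_degrees_eq_twice_card_edges
  rw [G.sum_degree_sq_eq_mul_sum_degree honly, hsum, mul_div_cancel_right₀ _ (mul_ne_zero two_ne_zero hm0)]

theorem two_main_eigenvalues_zero (G : SimpleGraph V) [DecidableRel G.Adj]
    (m : ℕ) (hm : G.edgeFinset.card = m)
    (lam1 : ℝ)
    (h1 : IsGreatest {μ | G.IsEigenvalue μ} lam1)
    (hmain1 : G.IsMainEigenvalue lam1) (hmain0 : G.IsMainEigenvalue 0)
    (hne : lam1 ≠ 0)
    (honly : ∀ μ, G.IsMainEigenvalue μ → μ = lam1 ∨ μ = 0) :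
    lam1 = (∑ v, (G.degree v : ℝ) ^ 2) / (2 * m) :=
  two_main_eigenvalues_zero_general G m hm lam1 hmain1 hne honly
end

section
/- If H is a bipartite harmonic graph with at least one edge and largest eigenvalue λ₁, then −λ₁ is a non-main eigenvalue of H. -/
open Matrix Finset Polynomial

variable {V : Type*} [Fintype V] [DecidableEq V]

/-!
Flipping the sign of an eigenvector on one colour class of a bipartite graph turns eigenvalue `μ`
into `-μ`, so `-λ₁` is an eigenvalue. For non-mainness, write `A` for the adjacency matrix,
`𝟙` for the all-ones vector and `d = A𝟙` for the degree vector, with `A d = ℓ d`. If `A y = μ y`,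
symmetry of `A` gives `μ ⟨𝟙, y⟩ = ⟨d, y⟩` and `μ ⟨d, y⟩ = ℓ ⟨d, y⟩`; hence `⟨𝟙, y⟩ = 0`
whenever `μ ∉ {0, ℓ}`. An edge makes `d ≠ 0` an eigenvector for `ℓ > 0`, so `λ₁ ≥ ℓ > 0` and
`-λ₁` is such a `μ`.
-/

namespace SimpleGraph

variable {W α : Type*} {G : SimpleGraph W}

lemma Coloring.neg_one_pow_eq_neg_of_adj [Ring α] (C : G.Coloring (Fin 2)) {u v : W}
    (h : G.Adj u v) : (-1 : α) ^ (C u : ℕ) = -(-1) ^ (C v : ℕ) := by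
  have hne := C.valid h
  generalize C u = a, C v = b at hne
  fin_cases a <;> fin_cases b <;> simp_all

variable [Fintype W] [DecidableRel G.Adj]

lemma Coloring.adjMatrix_mulVec_neg_one_pow_mul [CommRing α] (C : G.Coloring (Fin 2))
    (x : W → α) :
    G.adjMatrix α *ᵥ (fun v => (-1) ^ (C v : ℕ) * x v) =
      fun v => -((-1) ^ (C v : ℕ) * (G.adjMatrix α *ᵥ x) v) := by
  funext v
  simp only [adjMatrix_mulVec_apply, mul_sum, ← sum_neg_distrib]
  refine sum_congr rfl fun u hu => ?_
  rw [C.neg_one_pow_eq_neg_of_adj ((mem_neighborFinset G v u).1 hu).symm]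
  ring

lemma degree_cast_ne_zero [AddMonoidWithOne α] [CharZero α] (hG : G.edgeFinset.Nonempty) :
    (fun v => (G.degree v : α)) ≠ 0 := by
  obtain ⟨a, b, hab⟩ := ne_bot_iff_exists_adj.1 (edgeFinset_nonempty.1 hG)
  intro h
  have : G.degree a = 0 := by simpa using congrFun h a
  exact (G.degree_pos_iff_exists_adj a).2 ⟨b, hab⟩ |>.ne' this

lemma dotProduct_adjMatrix_mulVec_comm [CommSemiring α] (x y : W → α) :
    x ⬝ᵥ (G.adjMatrix α *ᵥ y) = (G.adjMatrix α *ᵥ x) ⬝ᵥ y := by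
  rw [dotProduct_mulVec, ← mulVec_transpose, transpose_adjMatrix]

lemma one_dotProduct_adjMatrix_mulVec [CommSemiring α] (y : W → α) :
    1 ⬝ᵥ (G.adjMatrix α *ᵥ y) = (fun v => (G.degree v : α)) ⬝ᵥ y := by
  rw [dotProduct_adjMatrix_mulVec_comm]
  congr 1
  funext v
  simp

lemma sum_eq_zero_of_adjMatrix_mulVec_degree_eq_smul [Field α] {ℓ μ : α}
    (hd : G.adjMatrix α *ᵥ (fun v => (G.degree v : α)) = ℓ • fun v => (G.degree v : α))
    (hμ0 : μ ≠ 0) (hμℓ : μ ≠ ℓ) {y : W → α} (hy : G.adjMatrix α *ᵥ y = μ • y) :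
    ∑ v, y v = 0 := by
  set d : W → α := fun v => (G.degree v : α)
  have hdy : d ⬝ᵥ y = 0 := by
    have : μ * (d ⬝ᵥ y) = ℓ * (d ⬝ᵥ y) := by
      rw [← smul_eq_mul, ← dotProduct_smul, ← hy, dotProduct_adjMatrix_mulVec_comm, hd,
        smul_dotProduct, smul_eq_mul]
    exact (mul_eq_mul_right_iff.1 this).resolve_left hμℓ
  have : μ * ∑ v, y v = 0 := by
    rw [← hdy, ← one_dotProduct_adjMatrix_mulVec, hy, dotProduct_smul, smul_eq_mul,
      one_dotProduct]
  exact (mul_eq_zero.1 this).resolve_left hμ0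

lemma IsEigenvalue.neg {μ : ℝ} (hG : G.Colorable 2) (hμ : G.IsEigenvalue μ) :
    G.IsEigenvalue (-μ) := by
  obtain ⟨C⟩ := hG
  obtain ⟨x, hx0, hx⟩ := hμ
  refine ⟨fun v => (-1) ^ (C v : ℕ) * x v, fun h => hx0 ?_, ?_⟩
  · funext v
    simpa using congrFun h v
  · rw [C.adjMatrix_mulVec_neg_one_pow_mul, hx]
    funext v
    simp only [Pi.smul_apply, smul_eq_mul]
    ring

end SimpleGraph

theorem bipartite_harmonic_neg_index_nonmain (H : SimpleGraph V) [DecidableRel H.Adj]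
    (hbip : H.Colorable 2) (hharm : H.IsHarmonic) (hedge : H.edgeFinset.Nonempty)
    (lam1 : ℝ) (h1 : IsGreatest {μ | H.IsEigenvalue μ} lam1) :
    H.IsNonMainEigenvalue (-lam1) := by
  obtain ⟨ℓ, hℓ, hdeg⟩ := hharm
  have hℓ_pos : (0 : ℝ) < ℓ := Nat.cast_pos.mpr hℓ
  have hℓ_le : (ℓ : ℝ) ≤ lam1 := h1.2 ⟨_, SimpleGraph.degree_cast_ne_zero hedge, hdeg⟩
  refine ⟨h1.1.neg hbip, ?_⟩
  rintro ⟨y, -, hy, hsum⟩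
  exact hsum <| SimpleGraph.sum_eq_zero_of_adjMatrix_mulVec_degree_eq_smul hdeg
    (by linarith) (by linarith) hy
end

section
/- For an eigenvalue λ of a graph G, the following are equivalent: (1) λ is non-main, or λ is main with multiplicity greater than 1; (2) there is an eigenvector x of G associated to λ with jᵀx = 0; (3) −1 − λ is an eigenvalue of the complement Ḡ. -/
/-!
Since `Ḡ` has adjacency matrix `J - I - A`, a vector `x` with `jᵀx = 0` is a `λ`-eigenvector of `A`
iff it is a `(-1 - λ)`-eigenvector of `Ḡ`. Conversely a `(-1 - λ)`-eigenvector `y` of `Ḡ` satisfies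
`A y - λ y = (jᵀy) j`; this vector is orthogonal to every `λ`-eigenvector `x` of the symmetric `A`,
so `jᵀy = 0` or `jᵀx = 0`.

On the `λ`-eigenspace `E` the functional `x ↦ jᵀx` has a kernel of dimension `dim E` (non-main
case) or `dim E - 1` (main case), and `dim E` is the multiplicity of `λ` because `A` is symmetric.
-/

open Matrix Finset Polynomial

variable {V : Type*} [Fintype V] [DecidableEq V]

open Module

theorem Submodule.exists_ne_zero_mem_ker_iff {K M : Type*} [Field K] [AddCommGroup M] [Module K M]
    {E : Submodule K M} [FiniteDimensional K E] (hE : E ≠ ⊥) (f : M →ₗ[K] K) :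
    (∃ x ∈ E, x ≠ 0 ∧ f x = 0) ↔ (∀ x ∈ E, f x = 0) ∨ 1 < finrank K E := by
  set g := f ∘ₗ E.subtype
  have hrank := g.finrank_range_add_finrank_ker
  have hrange : finrank K (LinearMap.range g) ≤ 1 :=
    (Submodule.finrank_le _).trans (finrank_self K).le
  have hpos : 1 ≤ finrank K E := Submodule.one_le_finrank_iff.mpr hE
  have hker : (∃ x ∈ E, x ≠ 0 ∧ f x = 0) ↔ 1 ≤ finrank K (LinearMap.ker g) := by
    simp only [Submodule.one_le_finrank_iff, Submodule.ne_bot_iff, LinearMap.mem_ker, g,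
      LinearMap.comp_apply, Submodule.subtype_apply, Subtype.exists, ne_eq, Submodule.mk_eq_zero]
    aesop
  have hzero : (∀ x ∈ E, f x = 0) ↔ finrank K (LinearMap.range g) = 0 := by
    rw [Submodule.finrank_eq_zero, LinearMap.range_eq_bot, LinearMap.ext_iff]
    simp [g]
  rw [hker, hzero]
  omega

/-- A symmetric operator is semisimple, so each eigenspace is the maximal generalized eigenspace,
whose dimension is the algebraic multiplicity. -/
theorem Matrix.IsHermitian.finrank_eigenspace_toLin' {𝕜 n : Type*} [RCLike 𝕜] [Fintype n]
    [DecidableEq n] {A : Matrix n n 𝕜} (hA : A.IsHermitian) (μ : 𝕜) :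
    finrank 𝕜 (End.eigenspace (toLin' A) μ) = A.charpoly.rootMultiplicity μ := by
  have hmap : (End.eigenspace (toEuclideanLin A) μ).map
      (WithLp.linearEquiv 2 𝕜 (n → 𝕜)).toLinearMap = End.eigenspace (toLin' A) μ := by
    ext x
    simp [← WithLp.toLp_smul]
  rw [← hmap, LinearEquiv.finrank_map_eq,
    ← (isSymmetric_toEuclideanLin_iff.mpr hA).isFinitelySemisimple.maxGenEigenspace_eq_eigenspace,
    LinearMap.finrank_maxGenEigenspace_eq, toEuclideanLin_eq_toLin_orthonormal, charpoly_toLin]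

theorem Matrix.IsSymm.dotProduct_mulVec_sub_smul_eq_zero {R n : Type*} [CommRing R] [Fintype n]
    {A : Matrix n n R} (hA : A.IsSymm) {μ : R} {x : n → R} (hx : A *ᵥ x = μ • x) (y : n → R) :
    x ⬝ᵥ (A *ᵥ y - μ • y) = 0 := by
  rw [dotProduct_sub, dotProduct_mulVec, ← mulVec_transpose, hA.eq, hx, smul_dotProduct,
    dotProduct_smul, sub_self]

namespace SimpleGraph

variable (G : SimpleGraph V) [DecidableRel G.Adj]

omit [Fintype V] in
theorem adjMatrix_compl {α : Type*} [AddGroup α] [One α] :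
    Gᶜ.adjMatrix α = of 1 - 1 - G.adjMatrix α := by
  ext u v
  by_cases h : u = v
  · subst h; simp
  · by_cases hG : G.Adj u v <;> simp [h, hG, one_apply]

theorem adjMatrix_compl_mulVec_eq_smul_iff {α : Type*} [CommRing α] (x : V → α) (μ : α) :
    Gᶜ.adjMatrix α *ᵥ x = (-1 - μ) • x ↔ G.adjMatrix α *ᵥ x - μ • x = (∑ v, x v) • 1 := by
  rw [adjMatrix_compl, sub_mulVec, sub_mulVec, one_mulVec]
  have hJ : (of 1 : Matrix V V α) *ᵥ x = (∑ v, x v) • 1 := by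
    ext; simp [mulVec, dotProduct]
  rw [hJ]
  constructor <;> intro h <;> linear_combination (norm := module) -h

omit [DecidableEq V] in
theorem not_isMainEigenvalue_iff {μ : ℝ} :
    ¬ G.IsMainEigenvalue μ ↔ ∀ x : V → ℝ, G.adjMatrix ℝ *ᵥ x = μ • x → ∑ v, x v = 0 := by
  simp only [IsMainEigenvalue, not_exists, not_and, not_not]
  refine ⟨fun h x hx => ?_, fun h x _ => h x⟩
  by_cases hx0 : x = 0
  · simp [hx0]
  · exact h x hx0 hx

theorem exists_eigenvector_sum_eq_zero_iff {μ : ℝ} (hμ : G.IsEigenvalue μ) :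
    (∃ x : V → ℝ, x ≠ 0 ∧ G.adjMatrix ℝ *ᵥ x = μ • x ∧ ∑ v, x v = 0) ↔
      ¬ G.IsMainEigenvalue μ ∨ 1 < G.eigMult μ := by
  set E := End.eigenspace (toLin' (G.adjMatrix ℝ)) μ
  have hmem (x : V → ℝ) : x ∈ E ↔ G.adjMatrix ℝ *ᵥ x = μ • x := by simp [E]
  obtain ⟨x₀, hx₀, hAx₀⟩ := hμ
  have hE : E ≠ ⊥ := Submodule.ne_bot_iff _ |>.mpr ⟨x₀, (hmem x₀).mpr hAx₀, hx₀⟩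
  rw [eigMult, ← (isHermitian_iff_isSymm.mpr G.isSymm_adjMatrix).finrank_eigenspace_toLin',
    not_isMainEigenvalue_iff]
  simpa [hmem, and_left_comm] using
    Submodule.exists_ne_zero_mem_ker_iff hE (∑ v, LinearMap.proj v)

end SimpleGraph

theorem nonmain_or_multiple_tfae (G : SimpleGraph V) [DecidableRel G.Adj]
    (lam : ℝ) (hlam : G.IsEigenvalue lam) :
    List.TFAE
      [G.IsNonMainEigenvalue lam ∨ (G.IsMainEigenvalue lam ∧ 1 < G.eigMult lam),
        ∃ x : V → ℝ, x ≠ 0 ∧ (G.adjMatrix ℝ) *ᵥ x = lam • x ∧ ∑ v, x v = 0,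
        Gᶜ.IsEigenvalue (-1 - lam)] := by
  tfae_have 1 ↔ 2 := by
    rw [G.exists_eigenvector_sum_eq_zero_iff hlam, SimpleGraph.IsNonMainEigenvalue]
    tauto
  tfae_have 2 → 3 := by
    rintro ⟨x, hx0, hx, hsum⟩
    refine ⟨x, hx0, (G.adjMatrix_compl_mulVec_eq_smul_iff x lam).mpr ?_⟩
    rw [hx, hsum, sub_self, zero_smul]
  tfae_have 3 → 2 := by
    rintro ⟨y, hy0, hy⟩
    rw [SimpleGraph.adjMatrix_compl_mulVec_eq_smul_iff] at hy
    by_cases hsum : ∑ v, y v = 0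
    · exact ⟨y, hy0, by rwa [hsum, zero_smul, sub_eq_zero] at hy, hsum⟩
    · obtain ⟨x, hx0, hx⟩ := hlam
      have hortho := G.isSymm_adjMatrix.dotProduct_mulVec_sub_smul_eq_zero hx y
      rw [hy, dotProduct_smul, dotProduct_one, smul_eq_mul, mul_eq_zero] at hortho
      exact ⟨x, hx0, hx, hortho.resolve_left hsum⟩
  tfae_finish
end

section
/- For any graph G of order n, λ₂(Ḡ) ≤ −1 − λₙ(G) ≤ λ₁(Ḡ), where λ₂(Ḡ) is the second largest eigenvalue of the complement Ḡ, λₙ(G) is the least eigenvalue of G, and λ₁(Ḡ) is the largest eigenvalue of Ḡ. -/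
open Matrix Finset Polynomial

variable {V : Type*} [Fintype V] [DecidableEq V]

/-! The complement has adjacency matrix `J - I - A`, so its quadratic form is
`x ↦ (∑ i, x i) ^ 2 - ‖x‖ ^ 2 - ⟪x, A x⟫`. Evaluated at an eigenvector of `λₙ(G)` this is at least
`(-1 - λₙ(G)) ‖x‖ ^ 2`, which bounds `λ₁(Gᶜ)` from below. Conversely, the span of the two top
eigenvectors of `Gᶜ` meets the hyperplane orthogonal to the all-ones vector in some `x ≠ 0`; there
the first term vanishes and `⟪x, A x⟫ ≥ λₙ(G) ‖x‖ ^ 2`, so `λ₂(Gᶜ) ≤ -1 - λₙ(G)`. -/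

open Module
open scoped InnerProductSpace

theorem finrank_le_finrank_orthogonal_span_singleton_add_one {𝕜 E : Type*} [RCLike 𝕜]
    [NormedAddCommGroup E] [InnerProductSpace 𝕜 E] [FiniteDimensional 𝕜 E] (v : E) :
    finrank 𝕜 E ≤ finrank 𝕜 (𝕜 ∙ v)ᗮ + 1 := by
  rw [← Submodule.finrank_add_finrank_orthogonal (𝕜 ∙ v), add_comm]
  gcongr
  exact (finrank_span_le_card {v}).trans (by simp)

namespace LinearMap.IsSymmetric

variable {𝕜 E : Type*} [RCLike 𝕜] [NormedAddCommGroup E] [InnerProductSpace 𝕜 E]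
  [FiniteDimensional 𝕜 E] {T : E →ₗ[𝕜] E} {n : ℕ} (hT : T.IsSymmetric) (hn : finrank 𝕜 E = n)

theorem re_inner_map_self_eq_sum (v : E) :
    RCLike.re ⟪v, T v⟫_𝕜 =
      ∑ i, hT.eigenvalues hn i * ‖⟪hT.eigenvectorBasis hn i, v⟫_𝕜‖ ^ 2 := by
  set b := hT.eigenvectorBasis hn
  have hcoord (i : Fin n) : ⟪b i, T v⟫_𝕜 = hT.eigenvalues hn i * ⟪b i, v⟫_𝕜 := by
    rw [← hT, apply_eigenvectorBasis, inner_smul_left, RCLike.conj_ofReal]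
  rw [← b.sum_inner_mul_inner, map_sum]
  refine Finset.sum_congr rfl fun i _ => ?_
  rw [hcoord, mul_left_comm, RCLike.re_ofReal_mul, ← inner_conj_symm, RCLike.conj_mul]
  norm_cast

theorem mul_norm_sq_le_re_inner_map_self {c : ℝ} {v : E}
    (h : ∀ i, ⟪hT.eigenvectorBasis hn i, v⟫_𝕜 ≠ 0 → c ≤ hT.eigenvalues hn i) :
    c * ‖v‖ ^ 2 ≤ RCLike.re ⟪v, T v⟫_𝕜 := by
  rw [hT.re_inner_map_self_eq_sum hn, ← (hT.eigenvectorBasis hn).sum_sq_norm_inner_right,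
    Finset.mul_sum]
  refine Finset.sum_le_sum fun i _ => ?_
  by_cases hi : ⟪hT.eigenvectorBasis hn i, v⟫_𝕜 = 0
  · simp [hi]
  · exact mul_le_mul_of_nonneg_right (h i hi) (by positivity)

theorem re_inner_map_self_le_mul_norm_sq {c : ℝ} (h : ∀ i, hT.eigenvalues hn i ≤ c) (v : E) :
    RCLike.re ⟪v, T v⟫_𝕜 ≤ c * ‖v‖ ^ 2 := by
  rw [hT.re_inner_map_self_eq_sum hn, ← (hT.eigenvectorBasis hn).sum_sq_norm_inner_right,
    Finset.mul_sum]
  exact Finset.sum_le_sum fun i _ => mul_le_mul_of_nonneg_right (h i) (by positivity)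

theorem exists_mem_ne_zero_eigenvalues_mul_norm_sq_le (K : Submodule 𝕜 E) (k : Fin n)
    (hK : n < finrank 𝕜 K + (k + 1)) :
    ∃ v ∈ K, v ≠ 0 ∧ hT.eigenvalues hn k * ‖v‖ ^ 2 ≤ RCLike.re ⟪v, T v⟫_𝕜 := by
  let b := (hT.eigenvectorBasis hn).toBasis
  have hW : finrank 𝕜 (Submodule.span 𝕜 (b '' Set.Iic k)) = k + 1 := by
    rw [Set.image_eq_range]
    exact (finrank_span_eq_card (b.linearIndependent.comp _ Subtype.val_injective)).trans
      (by simp [Fintype.card_subtype, Finset.filter_ge_eq_Iic])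
  obtain ⟨v, hv, hv0⟩ := (Submodule.ne_bot_iff (K ⊓ Submodule.span 𝕜 (b '' Set.Iic k))).mp
    fun h => by
      have := Submodule.finrank_add_finrank_le_of_disjoint (disjoint_iff.mpr h)
      omega
  obtain ⟨hvK, hvW⟩ := Submodule.mem_inf.mp hv
  refine ⟨v, hvK, hv0, hT.mul_norm_sq_le_re_inner_map_self hn fun i hi => ?_⟩
  apply hT.eigenvalues_antitone hn
  by_contra hik
  rw [Module.Basis.mem_span_image] at hvW
  apply hi
  rw [← OrthonormalBasis.repr_apply_apply, ← OrthonormalBasis.coe_toBasis_repr_apply]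
  exact Finsupp.notMem_support_iff.mp fun hs => hik (hvW hs)

theorem eigenvalues_eq_of_charpoly_eq_prod {e : Fin n → ℝ} (he : Antitone e)
    (h : T.charpoly = ∏ i, (X - C (e i : 𝕜))) : hT.eigenvalues hn = e := by
  rw [← List.ofFn_inj, ← hT.sort_roots_charpoly_eq_eigenvalues hn, h,
    roots_prod _ _ (Finset.prod_ne_zero_iff.mpr fun i _ => X_sub_C_ne_zero _)]
  simp_rw [roots_X_sub_C, Multiset.bind_singleton, Fin.univ_val_map, Multiset.map_coe,
    List.map_ofFn, Function.comp_def, RCLike.ofReal_re, Multiset.coe_sort]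
  apply List.mergeSort_of_pairwise
  simp_rw [decide_eq_true_eq, ← List.sortedGE_iff_pairwise]
  exact he.sortedGE_ofFn

end LinearMap.IsSymmetric

namespace SimpleGraph

variable (G : SimpleGraph V) [DecidableRel G.Adj]

theorem inner_toEuclideanLin_adjMatrix_compl (v : EuclideanSpace ℝ V) :
    ⟪v, toEuclideanLin (Gᶜ.adjMatrix ℝ) v⟫_ℝ =
      (∑ i, v i) ^ 2 - ‖v‖ ^ 2 - ⟪v, toEuclideanLin (G.adjMatrix ℝ) v⟫_ℝ := by
  have hcompl : Gᶜ.adjMatrix ℝ = of 1 - 1 - G.adjMatrix ℝ := by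
    classical
    rw [← G.compl_adjMatrix_eq_adjMatrix_compl ℝ,
      ← G.one_add_adjMatrix_add_compl_adjMatrix_eq_of_one ℝ]
    abel
  have hJ : toEuclideanLin (of 1 : Matrix V V ℝ) v = WithLp.toLp 2 fun _ => ∑ i, v i := by
    ext; simp [toLpLin_apply, mulVec, dotProduct]
  rw [hcompl, map_sub, map_sub, LinearMap.sub_apply, LinearMap.sub_apply, toLpLin_one,
    inner_sub_right, inner_sub_right, hJ, LinearMap.id_apply, real_inner_self_eq_norm_sq]
  simp [PiLp.inner_apply, Finset.mul_sum, sq]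

theorem isEigenvalue_iff_hasEigenvalue {μ : ℝ} :
    G.IsEigenvalue μ ↔ Module.End.HasEigenvalue (toEuclideanLin (G.adjMatrix ℝ)) μ := by
  constructor
  · rintro ⟨x, hx0, hx⟩
    refine Module.End.hasEigenvalue_of_hasEigenvector (x := WithLp.toLp 2 x)
      ⟨?_, by simpa using hx0⟩
    rw [Module.End.mem_eigenspace_iff, toLpLin_toLp, toLin'_apply, hx, WithLp.toLp_smul]
  · intro h
    obtain ⟨v, hv, hv0⟩ := h.exists_hasEigenvector
    refine ⟨WithLp.ofLp v, by simpa using hv0, ?_⟩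
    simpa [toLpLin_apply] using congrArg WithLp.ofLp (Module.End.mem_eigenspace_iff.mp hv)

theorem mul_norm_sq_le_inner_toEuclideanLin_adjMatrix {c : ℝ}
    (hc : c ∈ lowerBounds {μ | G.IsEigenvalue μ}) (v : EuclideanSpace ℝ V) :
    c * ‖v‖ ^ 2 ≤ ⟪v, toEuclideanLin (G.adjMatrix ℝ) v⟫_ℝ :=
  have hA := isSymmetric_toEuclideanLin_iff.mpr (G.isHermitian_adjMatrix ℝ)
  hA.mul_norm_sq_le_re_inner_map_self finrank_euclideanSpace fun i _ =>
    hc <| G.isEigenvalue_iff_hasEigenvalue.mpr (hA.hasEigenvalue_eigenvalues _ i)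

end SimpleGraph

theorem weyl_compl_inequalities {n : ℕ} (hn : 2 ≤ n)
    (G : SimpleGraph (Fin n)) [DecidableRel G.Adj]
    (lamn : ℝ) (hmin : IsLeast {μ | G.IsEigenvalue μ} lamn)
    (e : Fin n → ℝ) (he : Antitone e)
    (hchar : (Gᶜ.adjMatrix ℝ).charpoly = ∏ i, (X - C (e i))) :
    e ⟨1, by omega⟩ ≤ -1 - lamn ∧ -1 - lamn ≤ e ⟨0, by omega⟩ := by
  have hdim : finrank ℝ (EuclideanSpace ℝ (Fin n)) = n := finrank_euclideanSpace_fin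
  have hB := isSymmetric_toEuclideanLin_iff.mpr (Gᶜ.isHermitian_adjMatrix ℝ)
  have heB : hB.eigenvalues hdim = e := hB.eigenvalues_eq_of_charpoly_eq_prod hdim he
    ((charpoly_toLin _ (PiLp.basisFun 2 ℝ (Fin n))).trans hchar)
  have hA := G.mul_norm_sq_le_inner_toEuclideanLin_adjMatrix hmin.2
  constructor
  · let one : EuclideanSpace ℝ (Fin n) := WithLp.toLp 2 1
    have hK : n < finrank ℝ (ℝ ∙ one)ᗮ + (1 + 1) := by
      have := finrank_le_finrank_orthogonal_span_singleton_add_one (𝕜 := ℝ) one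
      omega
    obtain ⟨v, hvK, hv0, hv⟩ :=
      hB.exists_mem_ne_zero_eigenvalues_mul_norm_sq_le hdim (ℝ ∙ one)ᗮ ⟨1, by omega⟩ hK
    have hsum : ∑ i, v i = 0 := by
      simpa [one, PiLp.inner_apply] using Submodule.mem_orthogonal_singleton_iff_inner_right.mp hvK
    rw [heB, RCLike.re_to_real, G.inner_toEuclideanLin_adjMatrix_compl, hsum] at hv
    exact le_of_mul_le_mul_right (by linarith [hA v]) (pow_pos (norm_pos_iff.mpr hv0) 2)
  · obtain ⟨v, hv, hv0⟩ := (G.isEigenvalue_iff_hasEigenvalue.mp hmin.1).exists_hasEigenvector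
    have hle := hB.re_inner_map_self_le_mul_norm_sq hdim (c := e ⟨0, by omega⟩)
      (fun i => by rw [heB]; exact he (Nat.zero_le _)) v
    rw [RCLike.re_to_real, G.inner_toEuclideanLin_adjMatrix_compl,
      Module.End.mem_eigenspace_iff.mp hv, real_inner_smul_right, real_inner_self_eq_norm_sq] at hle
    exact le_of_mul_le_mul_right (by linarith [sq_nonneg (∑ i, v i)])
      (pow_pos (norm_pos_iff.mpr hv0) 2)
end

section
/- If G is a graph of order n, then the complement Ḡ has no eigenvalue strictly between −1 − λₙ(G) and λ₁(Ḡ), i.e., no eigenvalue in the open interval (−1 − λₙ(G), λ₁(Ḡ)). -/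
open Matrix Finset Polynomial

variable {V : Type*} [Fintype V] [DecidableEq V]

/-! If `μ < λ₁(Ḡ)` are eigenvalues of `Ḡ` with eigenvectors `x ⊥ w`, some nonzero `z` in the
span of `x` and `w` is orthogonal to the all-ones vector. On that span the quadratic form of `Ā`
is at least `μ ‖z‖²`. Orthogonally to the all-ones vector, `A + Ā = J - I` reduces to
`Ā = -I - A`, and `A ≥ λₙ I` gives `zᵀ Ā z ≤ -(1 + λₙ) ‖z‖²`. Hence `μ ≤ -1 - λₙ`. -/

namespace Matrix

variable {n : Type*} [Fintype n]

theorem IsHermitian.mul_dotProduct_self_le_dotProduct_mulVec [DecidableEq n]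
    {A : Matrix n n ℝ} (hA : A.IsHermitian) {c : ℝ}
    (hc : ∀ (μ : ℝ) (x : n → ℝ), x ≠ 0 → A *ᵥ x = μ • x → c ≤ μ) (y : n → ℝ) :
    c * (y ⬝ᵥ y) ≤ y ⬝ᵥ (A *ᵥ y) := by
  have hM : (A - c • 1).IsHermitian := hA.sub (isHermitian_one.smul (IsSelfAdjoint.all c))
  have hpsd : (A - c • 1).PosSemidef := by
    refine hM.posSemidef_iff_eigenvalues_nonneg.mpr fun i => ?_
    have hv := hM.mulVec_eigenvectorBasis i
    rw [sub_mulVec, smul_mulVec, one_mulVec, sub_eq_iff_eq_add, ← add_smul] at hv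
    have hv0 : ⇑(hM.eigenvectorBasis i) ≠ 0 := fun h =>
      hM.eigenvectorBasis.orthonormal.ne_zero i (by ext v; exact congrFun h v)
    rw [Pi.zero_apply]
    linarith [hc _ _ hv0 hv]
  have := hpsd.dotProduct_mulVec_nonneg y
  rw [star_trivial, sub_mulVec, smul_mulVec, one_mulVec, dotProduct_sub, dotProduct_smul,
    smul_eq_mul] at this
  linarith

theorem IsSymm.dotProduct_eq_zero_of_mulVec_eq_smul {B : Matrix n n ℝ} (hB : B.IsSymm)
    {x w : n → ℝ} {μ ν : ℝ} (hx : B *ᵥ x = μ • x) (hw : B *ᵥ w = ν • w) (hμν : μ ≠ ν) :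
    x ⬝ᵥ w = 0 := by
  have h : μ * (x ⬝ᵥ w) = ν * (x ⬝ᵥ w) := calc
    μ * (x ⬝ᵥ w) = w ⬝ᵥ (B *ᵥ x) := by rw [hx, dotProduct_smul, smul_eq_mul, dotProduct_comm]
    _ = x ⬝ᵥ (B *ᵥ w) := by rw [dotProduct_mulVec, ← mulVec_transpose, hB.eq, dotProduct_comm]
    _ = ν * (x ⬝ᵥ w) := by rw [hw, dotProduct_smul, smul_eq_mul]
  exact (mul_eq_mul_right_iff.mp h).resolve_left hμν

theorem mul_dotProduct_self_le_dotProduct_mulVec_of_orthogonal {B : Matrix n n ℝ}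
    {x w : n → ℝ} {μ ν : ℝ} (hx : B *ᵥ x = μ • x) (hw : B *ᵥ w = ν • w) (hxw : x ⬝ᵥ w = 0)
    (hμν : μ ≤ ν) (a b : ℝ) :
    μ * ((a • x + b • w) ⬝ᵥ (a • x + b • w)) ≤ (a • x + b • w) ⬝ᵥ (B *ᵥ (a • x + b • w)) := by
  have hwx : w ⬝ᵥ x = 0 := by rw [dotProduct_comm, hxw]
  have hww : 0 ≤ w ⬝ᵥ w := by simpa using dotProduct_star_self_nonneg w
  rw [mulVec_add, mulVec_smul, mulVec_smul, hx, hw]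
  simp only [add_dotProduct, dotProduct_add, smul_dotProduct, dotProduct_smul, smul_eq_mul, hxw,
    hwx]
  nlinarith [mul_nonneg (sub_nonneg.2 hμν) (mul_nonneg (mul_self_nonneg b) hww)]

theorem exists_smul_add_smul_ne_zero_sum_eq_zero {x w : n → ℝ} (hx : x ≠ 0) (hw : w ≠ 0)
    (hxw : x ⬝ᵥ w = 0) : ∃ a b : ℝ, a • x + b • w ≠ 0 ∧ ∑ v, (a • x + b • w) v = 0 := by
  by_cases hsx : ∑ v, x v = 0
  · exact ⟨1, 0, by simpa using hx, by simpa using hsx⟩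
  refine ⟨∑ v, w v, -∑ v, x v, fun h => ?_, ?_⟩
  · have := congrArg (· ⬝ᵥ w) h
    simp [add_dotProduct, smul_dotProduct, hxw, hsx, hw] at this
  · simp only [Pi.add_apply, Pi.smul_apply, smul_eq_mul, Finset.sum_add_distrib, ← Finset.mul_sum]
    ring

end Matrix

namespace SimpleGraph

variable (G : SimpleGraph V) [DecidableRel G.Adj]

theorem dotProduct_compl_adjMatrix_mulVec_le_of_sum_eq_zero {c : ℝ}
    (hc : c ∈ lowerBounds {μ | G.IsEigenvalue μ}) {z : V → ℝ} (hz : ∑ v, z v = 0) :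
    z ⬝ᵥ (Gᶜ.adjMatrix ℝ *ᵥ z) ≤ -(1 + c) * (z ⬝ᵥ z) := by
  have hA := isHermitian_iff_isSymm.mpr (G.isSymm_adjMatrix (α := ℝ))
  have hRayleigh := hA.mul_dotProduct_self_le_dotProduct_mulVec
    (fun μ x hx h => hc ⟨x, hx, h⟩) z
  have hsplit : G.adjMatrix ℝ + Gᶜ.adjMatrix ℝ = of 1 - 1 := by
    rw [← G.one_add_adjMatrix_add_compl_adjMatrix_eq_of_one ℝ,
      G.compl_adjMatrix_eq_adjMatrix_compl ℝ]
    abel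
  have hJ : z ⬝ᵥ (of 1 *ᵥ z) = 0 := by
    simp [dotProduct, mulVec, hz]
  have hquad := congrArg (fun M => z ⬝ᵥ (M *ᵥ z)) hsplit
  simp only [add_mulVec, sub_mulVec, dotProduct_add, dotProduct_sub, hJ, one_mulVec] at hquad
  linarith

end SimpleGraph

theorem no_eigenvalue_in_open_interval (G : SimpleGraph V) [DecidableRel G.Adj]
    (lamn mu1 : ℝ)
    (hmin : IsLeast {μ | G.IsEigenvalue μ} lamn)
    (hmax : IsGreatest {μ | Gᶜ.IsEigenvalue μ} mu1) :
    ∀ μ : ℝ, Gᶜ.IsEigenvalue μ → μ ∉ Set.Ioo (-1 - lamn) mu1 := by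
  rintro μ ⟨x, hx0, hx⟩ ⟨hlow, hup⟩
  obtain ⟨w, hw0, hw⟩ := hmax.1
  have hxw := Gᶜ.isSymm_adjMatrix.dotProduct_eq_zero_of_mulVec_eq_smul hx hw hup.ne
  obtain ⟨a, b, hz0, hsum⟩ := exists_smul_add_smul_ne_zero_sum_eq_zero hx0 hw0 hxw
  have hupper := G.dotProduct_compl_adjMatrix_mulVec_le_of_sum_eq_zero hmin.2 hsum
  have hlower := mul_dotProduct_self_le_dotProduct_mulVec_of_orthogonal hx hw hxw hup.le a b
  have hpos : 0 < (a • x + b • w) ⬝ᵥ (a • x + b • w) := by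
    simpa using dotProduct_star_self_pos_iff.mpr hz0
  nlinarith
end

section
/- For a graph G of order n, λ₁(Ḡ) = −1 − λₙ(G) if and only if λₙ(G) is a non-main eigenvalue of G and λ₁(Ḡ) has multiplicity greater than one. -/
open Matrix Finset Polynomial

variable {V : Type*} [Fintype V] [DecidableEq V]

/-!
Write `Ā = J - I - A` for the adjacency matrix of `Gᶜ`. On vectors orthogonal to the all-ones
vector, `Ā` acts as `-1 - A`, so non-main eigenvectors of `G` for `λ` and of `Gᶜ` for `-1 - λ`
are the same vectors; in particular `-1 - λₙ ≤ μ₁`. If `μ₁ = -1 - λₙ`, a main eigenvector `z` of `G`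
for `λₙ` would satisfy `zᵀĀz = (∑ z)² + μ₁ ‖z‖² > μ₁ ‖z‖²`, which the Rayleigh bound forbids; so
`λₙ` is non-main, and the `μ₁`-eigenspace contains both its non-main eigenvector and `|y|` for
any `μ₁`-eigenvector `y` (since `Ā ≥ 0`, `|y|` attains the Rayleigh bound, so it is an eigenvector,
and it is main), hence has dimension at least two. Conversely, an eigenspace of dimension at
least two contains a nonzero vector orthogonal to the all-ones vector, which is an eigenvector of
`G` for `-1 - μ₁ ≥ λₙ`. For symmetric matrices, dimension of eigenspace and multiplicity agree.
-/

open scoped ComplexOrder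

namespace Matrix

variable {n : Type*} [Fintype n]

theorem dotProduct_mulVec_le_abs {A : Matrix n n ℝ} (hA : ∀ i j, 0 ≤ A i j) (x : n → ℝ) :
    x ⬝ᵥ A *ᵥ x ≤ |x| ⬝ᵥ A *ᵥ |x| := by
  simp only [dotProduct, mulVec, Finset.mul_sum, Pi.abs_apply]
  refine Finset.sum_le_sum fun i _ => Finset.sum_le_sum fun j _ => ?_
  calc x i * (A i j * x j) ≤ |x i * (A i j * x j)| := le_abs_self _
    _ = |x i| * (A i j * |x j|) := by rw [abs_mul, abs_mul, abs_of_nonneg (hA i j)]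

theorem algebraMap_sub_mulVec {R : Type*} [CommRing R] [DecidableEq n] (A : Matrix n n R) (μ : R)
    (x : n → R) : (algebraMap R (Matrix n n R) μ - A) *ᵥ x = μ • x - A *ᵥ x := by
  rw [sub_mulVec, Algebra.algebraMap_eq_smul_one, smul_mulVec, one_mulVec]

namespace IsHermitian

variable [DecidableEq n]

section RCLike

variable {𝕜 : Type*} [RCLike 𝕜] {A : Matrix n n 𝕜} (hA : A.IsHermitian)
include hA

theorem posSemidef_algebraMap_sub {μ : ℝ} (hμ : ∀ i, hA.eigenvalues i ≤ μ) :
    (algebraMap ℝ (Matrix n n 𝕜) μ - A).PosSemidef := by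
  set U := hA.eigenvectorUnitary
  have hconj : algebraMap ℝ (Matrix n n 𝕜) μ - A =
      Unitary.conjStarAlgAut 𝕜 _ U (diagonal fun i => ((μ - hA.eigenvalues i : ℝ) : 𝕜)) := by
    calc algebraMap ℝ (Matrix n n 𝕜) μ - A
        = Unitary.conjStarAlgAut 𝕜 _ U (algebraMap 𝕜 _ μ) -
            Unitary.conjStarAlgAut 𝕜 _ U (diagonal (RCLike.ofReal ∘ hA.eigenvalues)) := by
          rw [← hA.spectral_theorem, AlgHomClass.commutes, IsScalarTower.algebraMap_apply ℝ 𝕜]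
      _ = _ := by
          rw [← map_sub, algebraMap_eq_diagonal, diagonal_sub]
          congr 2
          ext i
          simp
  rw [hconj, Unitary.conjStarAlgAut_apply]
  refine PosSemidef.mul_mul_conjTranspose_same ?_ _
  exact posSemidef_diagonal_iff.mpr fun i => by simpa using hμ i

theorem isSemisimple_toLin' : Module.End.IsSemisimple (toLin' A) := by
  have hsymm := (isSymmetric_toEuclideanLin_iff.mpr hA).isFinitelySemisimple
  rw [Module.End.isFinitelySemisimple_iff_isSemisimple] at hsymm
  exact ((WithLp.linearEquiv 2 𝕜 (n → 𝕜)).isSemisimple_iff _ (toLin' A) rfl).mp hsymm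

theorem finrank_eigenspace_toLin'_s10 (μ : 𝕜) :
    Module.finrank 𝕜 (Module.End.eigenspace (toLin' A) μ) = A.charpoly.rootMultiplicity μ := by
  rw [← hA.isSemisimple_toLin'.isFinitelySemisimple.maxGenEigenspace_eq_eigenspace,
    LinearMap.finrank_maxGenEigenspace_eq, charpoly_toLin']

end RCLike

variable {A : Matrix n n ℝ} (hA : A.IsHermitian) {μ : ℝ}

theorem dotProduct_mulVec_le (hμ : ∀ i, hA.eigenvalues i ≤ μ) (x : n → ℝ) :
    x ⬝ᵥ A *ᵥ x ≤ μ * (x ⬝ᵥ x) := by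
  have := (hA.posSemidef_algebraMap_sub hμ).dotProduct_mulVec_nonneg x
  rw [star_trivial, algebraMap_sub_mulVec, dotProduct_sub, dotProduct_smul, smul_eq_mul] at this
  linarith

theorem mulVec_eq_smul_of_le_dotProduct (hμ : ∀ i, hA.eigenvalues i ≤ μ) (x : n → ℝ)
    (h : μ * (x ⬝ᵥ x) ≤ x ⬝ᵥ A *ᵥ x) : A *ᵥ x = μ • x := by
  have hzero := (hA.posSemidef_algebraMap_sub hμ).dotProduct_mulVec_zero_iff x
  rw [star_trivial, algebraMap_sub_mulVec, dotProduct_sub, dotProduct_smul, smul_eq_mul,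
    sub_eq_zero, sub_eq_zero] at hzero
  exact (hzero.mp (le_antisymm (hA.dotProduct_mulVec_le hμ x) h).symm).symm

theorem mulVec_abs_eq_smul_abs
    (hA₀ : ∀ i j, 0 ≤ A i j) (hμ : ∀ i, hA.eigenvalues i ≤ μ) {y : n → ℝ}
    (hy : A *ᵥ y = μ • y) : A *ᵥ |y| = μ • |y| := by
  refine hA.mulVec_eq_smul_of_le_dotProduct hμ _ ?_
  calc μ * (|y| ⬝ᵥ |y|) = y ⬝ᵥ A *ᵥ y := by
        rw [hy, dotProduct_smul, smul_eq_mul]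
        congr 1
        simp only [dotProduct, Pi.abs_apply, abs_mul_abs_self]
    _ ≤ |y| ⬝ᵥ A *ᵥ |y| := dotProduct_mulVec_le_abs hA₀ y

end IsHermitian

end Matrix

namespace Submodule

variable {K M : Type*} [Field K] [AddCommGroup M] [Module K M] (f : M →ₗ[K] K) {E : Submodule K M}
  [FiniteDimensional K E]

theorem one_lt_finrank_of_apply_eq_zero_of_apply_ne_zero {x w : M} (hxE : x ∈ E) (hx : x ≠ 0)
    (hfx : f x = 0) (hwE : w ∈ E) (hfw : f w ≠ 0) : 1 < Module.finrank K E := by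
  by_contra! hle
  obtain ⟨v, hv⟩ := finrank_le_one_iff.mp hle
  obtain ⟨a, ha⟩ := hv ⟨x, hxE⟩
  obtain ⟨b, hb⟩ := hv ⟨w, hwE⟩
  replace ha : a • (v : M) = x := congrArg Subtype.val ha
  replace hb : b • (v : M) = w := congrArg Subtype.val hb
  have hfv : f v ≠ 0 := fun h => hfw (by rw [← hb, map_smul, h, smul_zero])
  have ha0 : a = 0 := by
    rw [← ha, map_smul, smul_eq_mul] at hfx
    exact (mul_eq_zero.mp hfx).resolve_right hfv
  exact hx (by rw [← ha, ha0, zero_smul])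

theorem exists_ne_zero_apply_eq_zero_of_one_lt_finrank (h : 1 < Module.finrank K E) :
    ∃ x ∈ E, x ≠ 0 ∧ f x = 0 := by
  set g := f.domRestrict E
  have hker : LinearMap.ker g ≠ ⊥ := by
    intro hbot
    have hsum := g.finrank_range_add_finrank_ker
    have hrange := Submodule.finrank_le (LinearMap.range g)
    rw [hbot, finrank_bot, Module.finrank_self] at *
    omega
  obtain ⟨⟨x, hxE⟩, hx, hx0⟩ := exists_mem_ne_zero_of_ne_bot hker
  exact ⟨x, hxE, fun h => hx0 (by simp [h]), hx⟩

end Submodule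

namespace SimpleGraph

variable (G : SimpleGraph V) [DecidableRel G.Adj]

theorem adjMatrix_mulVec_add_compl_mulVec {α : Type*} [Ring α] (x : V → α) :
    G.adjMatrix α *ᵥ x + Gᶜ.adjMatrix α *ᵥ x = (fun _ => ∑ v, x v) - x := by
  classical
  have hJ := G.one_add_adjMatrix_add_compl_adjMatrix_eq_of_one α
  rw [compl_adjMatrix_eq_adjMatrix_compl, add_assoc, ← eq_sub_iff_add_eq'] at hJ
  rw [← add_mulVec, hJ, sub_mulVec, one_mulVec]
  congr 1
  ext v
  simp [mulVec, dotProduct]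

theorem compl_adjMatrix_mulVec_eq_smul_iff {x : V → ℝ} (hx : ∑ v, x v = 0) (μ : ℝ) :
    Gᶜ.adjMatrix ℝ *ᵥ x = μ • x ↔ G.adjMatrix ℝ *ᵥ x = (-1 - μ) • x := by
  have h := G.adjMatrix_mulVec_add_compl_mulVec x
  rw [show (fun _ : V => ∑ v, x v) = 0 from funext fun _ => hx, zero_sub] at h
  constructor <;> intro h' <;> rw [h'] at h
  · linear_combination (norm := module) h
  · linear_combination (norm := module) h

theorem compl_adjMatrix_mulVec_eq_smul {x : V → ℝ} (hx : ∑ v, x v = 0) {μ : ℝ}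
    (h : G.adjMatrix ℝ *ᵥ x = μ • x) : Gᶜ.adjMatrix ℝ *ᵥ x = (-1 - μ) • x :=
  (G.compl_adjMatrix_mulVec_eq_smul_iff hx _).mpr (by rw [h, sub_sub_cancel])

theorem isEigenvalue_eigenvalues (i : V) :
    G.IsEigenvalue ((G.isHermitian_adjMatrix ℝ).eigenvalues i) :=
  ⟨_, (G.isHermitian_adjMatrix ℝ).eigenvectorBasis.orthonormal.ne_zero i ∘ congrArg (WithLp.toLp 2),
    (G.isHermitian_adjMatrix ℝ).mulVec_eigenvectorBasis i⟩

omit [DecidableEq V] in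
theorem IsNonMainEigenvalue.exists_sum_eq_zero {μ : ℝ} (h : G.IsNonMainEigenvalue μ) :
    ∃ x : V → ℝ, x ≠ 0 ∧ G.adjMatrix ℝ *ᵥ x = μ • x ∧ ∑ v, x v = 0 := by
  obtain ⟨⟨x, hx0, hx⟩, hmain⟩ := h
  exact ⟨x, hx0, hx, by_contra fun hs => hmain ⟨x, hx0, hx, hs⟩⟩

theorem isMainEigenvalue_of_isGreatest {μ : ℝ} (h : IsGreatest {μ | G.IsEigenvalue μ} μ) :
    G.IsMainEigenvalue μ := by
  obtain ⟨y, hy0, hy⟩ := h.1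
  refine ⟨|y|, by simpa using hy0, ?_, ?_⟩
  · exact (G.isHermitian_adjMatrix ℝ).mulVec_abs_eq_smul_abs (fun i j => by
      rw [adjMatrix_apply]; positivity) (fun i => h.2 (G.isEigenvalue_eigenvalues i)) hy
  · obtain ⟨v, hv⟩ := Function.ne_iff.mp hy0
    exact (Finset.sum_pos' (fun v _ => abs_nonneg (y v)) ⟨v, Finset.mem_univ v, abs_pos.mpr hv⟩).ne'

theorem not_isMainEigenvalue_of_compl_eigenvalues_le {lam : ℝ}
    (h : ∀ i, (Gᶜ.isHermitian_adjMatrix ℝ).eigenvalues i ≤ -1 - lam) :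
    ¬ G.IsMainEigenvalue lam := by
  rintro ⟨z, -, hz, hzs⟩
  have hcompl : Gᶜ.adjMatrix ℝ *ᵥ z = (fun _ => ∑ v, z v) - z - lam • z := by
    rw [← hz, ← G.adjMatrix_mulVec_add_compl_mulVec z]
    abel
  have hquad : z ⬝ᵥ Gᶜ.adjMatrix ℝ *ᵥ z = (∑ v, z v) ^ 2 + (-1 - lam) * (z ⬝ᵥ z) := by
    rw [hcompl, dotProduct_sub, dotProduct_sub, dotProduct_smul, smul_eq_mul]
    simp only [dotProduct, ← Finset.sum_mul]
    ring
  have hle := (Gᶜ.isHermitian_adjMatrix ℝ).dotProduct_mulVec_le h z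
  exact hzs ((pow_eq_zero_iff two_ne_zero).mp (le_antisymm (by linarith) (sq_nonneg _)))

theorem eigMult_eq_finrank_eigenspace (μ : ℝ) :
    G.eigMult μ = Module.finrank ℝ (Module.End.eigenspace (toLin' (G.adjMatrix ℝ)) μ) :=
  (Matrix.IsHermitian.finrank_eigenspace_toLin'_s10 (G.isHermitian_adjMatrix ℝ) μ).symm

end SimpleGraph

theorem compl_index_eq_iff (G : SimpleGraph V) [DecidableRel G.Adj]
    (lamn mu1 : ℝ)
    (hmin : IsLeast {μ | G.IsEigenvalue μ} lamn)
    (hmax : IsGreatest {μ | Gᶜ.IsEigenvalue μ} mu1) :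
    mu1 = -1 - lamn ↔ (G.IsNonMainEigenvalue lamn ∧ 1 < Gᶜ.eigMult mu1) := by
  set sum : (V → ℝ) →ₗ[ℝ] ℝ := ∑ v, LinearMap.proj v
  have hsum (x : V → ℝ) : sum x = ∑ v, x v := by simp [sum]
  have hup i : (Gᶜ.isHermitian_adjMatrix ℝ).eigenvalues i ≤ mu1 :=
    hmax.2 (Gᶜ.isEigenvalue_eigenvalues i)
  rw [SimpleGraph.eigMult_eq_finrank_eigenspace]
  constructor
  · rintro rfl
    have hnm : G.IsNonMainEigenvalue lamn :=
      ⟨hmin.1, G.not_isMainEigenvalue_of_compl_eigenvalues_le hup⟩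
    obtain ⟨x, hx0, hx, hxs⟩ := hnm.exists_sum_eq_zero
    obtain ⟨w, -, hw, hws⟩ := Gᶜ.isMainEigenvalue_of_isGreatest hmax
    exact ⟨hnm, Submodule.one_lt_finrank_of_apply_eq_zero_of_apply_ne_zero sum
      (Module.End.mem_eigenspace_iff.mpr (G.compl_adjMatrix_mulVec_eq_smul hxs hx)) hx0 (by rwa [hsum])
      (Module.End.mem_eigenspace_iff.mpr hw) (by rwa [hsum])⟩
  · rintro ⟨hnm, hmult⟩
    obtain ⟨x, hx0, hx, hxs⟩ := hnm.exists_sum_eq_zero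
    obtain ⟨z, hz, hz0, hzs⟩ := Submodule.exists_ne_zero_apply_eq_zero_of_one_lt_finrank sum hmult
    rw [hsum] at hzs
    have hcompl : -1 - lamn ≤ mu1 := hmax.2 ⟨x, hx0, G.compl_adjMatrix_mulVec_eq_smul hxs hx⟩
    have hG : lamn ≤ -1 - mu1 := hmin.2 ⟨z, hz0,
      (G.compl_adjMatrix_mulVec_eq_smul_iff hzs mu1).mp (Module.End.mem_eigenspace_iff.mp hz)⟩
    linarith
end

section
/- For the path P_n on n ≥ 2 vertices with eigenvalues λⱼ = 2cos(jπ/(n+1)) for 1 ≤ j ≤ n, the eigenvalue λⱼ is non-main if and only if j is even. -/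
open Matrix Finset Polynomial

variable {V : Type*} [Fintype V] [DecidableEq V]

/-!
With `θ = jπ/(n+1)`, the vector `xᵢ = sin((i+1)θ)` is an eigenvector of the path for `2 cos θ`
(the boundary condition `sin((n+1)θ) = 0` closes the last row), and the three-term recurrence
`y_{i-1} + y_{i+1} = μ yᵢ` determines an eigenvector from its first entry, so the eigenspace is
the line through `x`. Hence the eigenvalue is non-main exactly when `∑ sin(mθ) = 0`, and
telescoping against `2 sin(θ/2)` turns that sum into `(1 - (-1)ʲ) cos(θ/2)`.
-/

open Real

namespace SimpleGraph

theorem isNonMainEigenvalue_iff_sum_eq_zero {α : Type*} [Fintype α] {G : SimpleGraph α}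
    [DecidableRel G.Adj] {μ : ℝ} {x : α → ℝ} (hx0 : x ≠ 0) (hx : G.adjMatrix ℝ *ᵥ x = μ • x)
    (hspan : ∀ y, G.adjMatrix ℝ *ᵥ y = μ • y → ∃ c : ℝ, y = c • x) :
    G.IsNonMainEigenvalue μ ↔ ∑ v, x v = 0 := by
  refine ⟨fun h => by_contra fun hsum => h.2 ⟨x, hx0, hx, hsum⟩,
    fun hsum => ⟨⟨x, hx0, hx⟩, ?_⟩⟩
  rintro ⟨y, -, hy, hysum⟩
  obtain ⟨c, rfl⟩ := hspan y hy
  simp [← Finset.mul_sum, hsum] at hysum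

namespace pathGraph

variable {n : ℕ}

/-- Vertex `i` sits at position `i + 1`, padded by zeros at `0` and beyond `n`, so that the end
rows of the adjacency matrix need no special case. -/
def zeroPad (y : Fin n → ℝ) : ℕ → ℝ
  | 0 => 0
  | m + 1 => if h : m < n then y ⟨m, h⟩ else 0

@[simp]
theorem zeroPad_zero (y : Fin n → ℝ) : zeroPad y 0 = 0 := rfl

@[simp]
theorem zeroPad_val_add_one (y : Fin n → ℝ) (i : Fin n) : zeroPad y (i + 1) = y i := by
  simp [zeroPad]

theorem zeroPad_of_lt (y : Fin n → ℝ) {m : ℕ} (hm : n < m) : zeroPad y m = 0 := by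
  obtain ⟨m, rfl⟩ : ∃ k, m = k + 1 := ⟨m - 1, by omega⟩
  simp [zeroPad, show ¬ m < n by omega]

theorem zeroPad_eq_sum (y : Fin n → ℝ) (m : ℕ) :
    zeroPad y m = ∑ k : Fin n, if (k : ℕ) + 1 = m then y k else 0 := by
  cases m with
  | zero => simp
  | succ m =>
    by_cases hm : m < n
    · have hk (k : Fin n) : (k : ℕ) = m ↔ k = ⟨m, hm⟩ := by rw [Fin.ext_iff]
      simp [zeroPad, hm, hk]
    · simp only [zeroPad, hm, dite_false, add_left_inj]
      exact (Finset.sum_eq_zero fun k _ => if_neg fun hk => hm (by omega)).symm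

variable [DecidableRel (pathGraph n).Adj]

theorem adjMatrix_mulVec_apply (y : Fin n → ℝ) (i : Fin n) :
    ((pathGraph n).adjMatrix ℝ *ᵥ y) i = zeroPad y i + zeroPad y (i + 2) := by
  rw [mulVec, dotProduct, zeroPad_eq_sum, zeroPad_eq_sum, ← Finset.sum_add_distrib]
  refine Finset.sum_congr rfl fun k _ => ?_
  simp only [adjMatrix_apply, pathGraph_adj]
  split_ifs <;> first | omega | simp

theorem eq_zero_of_mulVec_eq_smul [NeZero n] {μ : ℝ} {y : Fin n → ℝ}
    (hy : (pathGraph n).adjMatrix ℝ *ᵥ y = μ • y) (h0 : y 0 = 0) : y = 0 := by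
  have hrec (i : Fin n) : zeroPad y (i + 2) = μ * zeroPad y (i + 1) - zeroPad y i := by
    have := congrFun hy i
    rw [adjMatrix_mulVec_apply, Pi.smul_apply, smul_eq_mul, ← zeroPad_val_add_one y i] at this
    linarith
  have hvanish (m : ℕ) : zeroPad y m = 0 ∧ zeroPad y (m + 1) = 0 := by
    induction m with
    | zero => exact ⟨rfl, by simpa using (zeroPad_val_add_one y 0).trans h0⟩
    | succ m ih =>
      refine ⟨ih.2, ?_⟩
      by_cases hm : m < n
      · simpa [ih.1, ih.2] using hrec ⟨m, hm⟩
      · exact zeroPad_of_lt y (by omega)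
  funext i
  simpa using (hvanish i).2

theorem eq_smul_of_mulVec_eq_smul [NeZero n] {μ : ℝ} {x y : Fin n → ℝ}
    (hx : (pathGraph n).adjMatrix ℝ *ᵥ x = μ • x) (hy : (pathGraph n).adjMatrix ℝ *ᵥ y = μ • y)
    (hx0 : x 0 ≠ 0) : y = (y 0 / x 0) • x := by
  refine sub_eq_zero.mp (eq_zero_of_mulVec_eq_smul (μ := μ) ?_ ?_)
  · rw [mulVec_sub, mulVec_smul, hx, hy, smul_sub, smul_comm]
  · simp [hx0]

noncomputable def sinVec (n : ℕ) (θ : ℝ) : Fin n → ℝ := fun i => sin ((i + 1) * θ)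

theorem zeroPad_sinVec {θ : ℝ} (hθ : sin ((n + 1) * θ) = 0) {m : ℕ} (hm : m ≤ n + 1) :
    zeroPad (sinVec n θ) m = sin (m * θ) := by
  cases m with
  | zero => simp
  | succ m =>
    by_cases h : m < n
    · simpa [sinVec] using zeroPad_val_add_one (sinVec n θ) ⟨m, h⟩
    · obtain rfl : m = n := by omega
      simp [zeroPad, hθ]

theorem mulVec_sinVec {θ : ℝ} (hθ : sin ((n + 1) * θ) = 0) :
    (pathGraph n).adjMatrix ℝ *ᵥ sinVec n θ = (2 * cos θ) • sinVec n θ := by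
  funext i
  have hi := i.isLt
  rw [adjMatrix_mulVec_apply, zeroPad_sinVec hθ (by omega), zeroPad_sinVec hθ (by omega),
    Pi.smul_apply, smul_eq_mul, sinVec, add_comm, sin_add_sin]
  push_cast
  ring_nf

theorem sum_sinVec (n : ℕ) (θ : ℝ) : ∑ i, sinVec n θ i = ∑ m ∈ range n, sin ((m + 1) * θ) :=
  Fin.sum_univ_eq_sum_range (fun m => sin ((m + 1) * θ)) n

end pathGraph

end SimpleGraph

theorem two_mul_sin_half_mul_sum_sin (θ : ℝ) (n : ℕ) :
    2 * sin (θ / 2) * ∑ m ∈ range n, sin ((m + 1) * θ) = cos (θ / 2) - cos ((n + 1 / 2) * θ) := by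
  induction n with
  | zero => simp [div_eq_inv_mul]
  | succ n ih =>
    rw [sum_range_succ, mul_add, ih, show (n + 1 / 2) * θ = (n + 1) * θ - θ / 2 by ring,
      show ((n + 1 : ℕ) + 1 / 2) * θ = (n + 1) * θ + θ / 2 by push_cast; ring, cos_sub, cos_add]
    ring

theorem nat_mul_pi_div_mem_Ioo {n j : ℕ} (hj1 : 1 ≤ j) (hjn : j ≤ n) :
    j * π / (n + 1) ∈ Set.Ioo 0 π := by
  refine ⟨by positivity, ?_⟩
  rw [div_lt_iff₀ (by positivity)]
  nlinarith [pi_pos, (by exact_mod_cast hjn : (j : ℝ) ≤ n)]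

theorem sum_sin_eq_zero_iff_even {n j : ℕ} (hj1 : 1 ≤ j) (hjn : j ≤ n) :
    ∑ m ∈ range n, sin ((m + 1) * (j * π / (n + 1))) = 0 ↔ Even j := by
  set θ := j * π / (n + 1) with hθ
  obtain ⟨hθ0, hθπ⟩ := nat_mul_pi_div_mem_Ioo hj1 hjn
  have hsin : 0 < sin (θ / 2) := sin_pos_of_pos_of_lt_pi (by linarith) (by linarith)
  have hcos : 0 < cos (θ / 2) := cos_pos_of_mem_Ioo ⟨by linarith, by linarith⟩
  have hsum :
      2 * sin (θ / 2) * ∑ m ∈ range n, sin ((m + 1) * θ) = (1 - (-1) ^ j) * cos (θ / 2) := by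
    rw [two_mul_sin_half_mul_sum_sin, show (n + 1 / 2) * θ = j * π - θ / 2 by
      rw [hθ]; field_simp; ring, cos_nat_mul_pi_sub]
    ring
  calc ∑ m ∈ range n, sin ((m + 1) * θ) = 0
      ↔ 2 * sin (θ / 2) * ∑ m ∈ range n, sin ((m + 1) * θ) = 0 := by simp [hsin.ne']
    _ ↔ (-1 : ℝ) ^ j = 1 := by rw [hsum, mul_eq_zero, or_iff_left hcos.ne', sub_eq_zero, eq_comm]
    _ ↔ Even j := neg_one_pow_eq_one_iff_even (by norm_num)

theorem path_nonmain_iff_even_general {n : ℕ}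
    [DecidableRel (SimpleGraph.pathGraph n).Adj]
    (j : ℕ) (hj1 : 1 ≤ j) (hjn : j ≤ n) :
    (SimpleGraph.pathGraph n).IsNonMainEigenvalue
        (2 * Real.cos (j * Real.pi / (n + 1))) ↔ Even j := by
  have : NeZero n := ⟨by omega⟩
  set θ : ℝ := j * π / (n + 1) with hθ
  obtain ⟨hθ0, hθπ⟩ := nat_mul_pi_div_mem_Ioo hj1 hjn
  have hsin : sin ((n + 1) * θ) = 0 := by
    rw [hθ, mul_div_cancel₀ _ (by positivity)]
    exact sin_nat_mul_pi j
  have hx := SimpleGraph.pathGraph.mulVec_sinVec hsin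
  have hx0 : SimpleGraph.pathGraph.sinVec n θ 0 ≠ 0 := by
    simpa [SimpleGraph.pathGraph.sinVec] using (sin_pos_of_pos_of_lt_pi hθ0 hθπ).ne'
  rw [SimpleGraph.isNonMainEigenvalue_iff_sum_eq_zero (fun h => hx0 (congrFun h 0)) hx
    fun y hy => ⟨_, SimpleGraph.pathGraph.eq_smul_of_mulVec_eq_smul hx hy hx0⟩,
    SimpleGraph.pathGraph.sum_sinVec, sum_sin_eq_zero_iff_even hj1 hjn]

theorem path_nonmain_iff_even {n : ℕ} (hn : 2 ≤ n)
    [DecidableRel (SimpleGraph.pathGraph n).Adj]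
    (j : ℕ) (hj1 : 1 ≤ j) (hjn : j ≤ n) :
    (SimpleGraph.pathGraph n).IsNonMainEigenvalue
        (2 * Real.cos (j * Real.pi / (n + 1))) ↔ Even j :=
  path_nonmain_iff_even_general j hj1 hjn
end

section
/- The least eigenvalue of the path P_n (n ≥ 2) is non-main if and only if n is even. -/
open Matrix Finset Polynomial

variable {V : Type*} [Fintype V] [DecidableEq V]

/-!
Padding an eigenvector `x` of `P_n` for `μ` by `x₀ = x_{n+1} = 0`, the eigen-equation reads
`x_{k-1} + x_{k+1} = μ x_k`, so `x_k = x₁ U_{k-1}(μ/2)`. Hence `μ` is an eigenvalue iff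
`U_n(μ/2) = 0`, its eigenspace is a line, and it is non-main iff `∑_{k=1}^n U_{k-1}(μ/2) = 0`.
For `μ = 2 cos t` we have `U_{k-1}(μ/2) sin t = sin (k t)`, so the least eigenvalue is
`2 cos t₀` with `t₀ = nπ/(n+1)` (for `μ ≤ -2` the sequence `(-1)^(k+1) U_{k-1}(μ/2)` grows at
least like `k`), and telescoping `2 sin (t/2) sin (k t)` gives
`2 sin (t₀/2) ∑_{k=1}^n sin (k t₀) = (1 - (-1)^n) cos (t₀/2)`, which vanishes iff `n` is even.
-/

open SimpleGraph Real Polynomial.Chebyshev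

noncomputable def pathSeq (μ : ℝ) (k : ℕ) : ℝ := (U ℝ ((k : ℤ) - 1)).eval (μ / 2)

@[simp] lemma pathSeq_zero (μ : ℝ) : pathSeq μ 0 = 0 := by simp [pathSeq]

@[simp] lemma pathSeq_one (μ : ℝ) : pathSeq μ 1 = 1 := by simp [pathSeq]

lemma pathSeq_add_two (μ : ℝ) (k : ℕ) :
    pathSeq μ (k + 2) = μ * pathSeq μ (k + 1) - pathSeq μ k := by
  have h := U_add_two ℝ ((k : ℤ) - 1)
  simp only [pathSeq, Nat.cast_add, Nat.cast_one, Nat.cast_ofNat]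
  rw [show (k : ℤ) + 2 - 1 = (k - 1) + 2 by ring, h, show (k : ℤ) + 1 - 1 = (k - 1) + 1 by ring]
  simp only [eval_sub, eval_mul, eval_ofNat, eval_X]
  ring

lemma pathSeq_two_mul_cos_mul_sin (t : ℝ) (k : ℕ) :
    pathSeq (2 * cos t) k * sin t = sin (k * t) := by
  rw [pathSeq, mul_div_cancel_left₀ _ two_ne_zero, U_real_cos]
  push_cast
  ring_nf

lemma le_neg_one_pow_mul_pathSeq {μ : ℝ} (hμ : μ ≤ -2) (k : ℕ) :
    (k : ℝ) ≤ (-1) ^ (k + 1) * pathSeq μ k := by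
  suffices h : ∀ k : ℕ, (k : ℝ) ≤ (-1) ^ (k + 1) * pathSeq μ k ∧
      (-1) ^ (k + 1) * pathSeq μ k + 1 ≤ (-1) ^ (k + 2) * pathSeq μ (k + 1) from (h k).1
  intro k
  induction k with
  | zero => norm_num
  | succ k ih =>
    set a := (-1 : ℝ) ^ (k + 2) * pathSeq μ (k + 1)
    have ha : 0 ≤ a := by linarith [ih.1, ih.2, k.cast_nonneg (α := ℝ)]
    have hrec : (-1 : ℝ) ^ (k + 1 + 2) * pathSeq μ (k + 1 + 1) =
        -μ * a - (-1) ^ (k + 1) * pathSeq μ k := by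
      rw [pathSeq_add_two]; ring
    refine ⟨by push_cast; linarith [ih.1, ih.2], ?_⟩
    rw [hrec]
    nlinarith [ih.2]

lemma sum_sin_mul_two_sin_half (t : ℝ) (n : ℕ) :
    (∑ k ∈ Finset.range n, sin ((k + 1) * t)) * (2 * sin (t / 2)) =
      cos (t / 2) - cos ((2 * n + 1) * t / 2) := by
  induction n with
  | zero => simp
  | succ n ih =>
    have hstep : cos ((2 * n + 1) * t / 2) - cos ((2 * n + 3) * t / 2) =
        sin ((n + 1) * t) * (2 * sin (t / 2)) := by
      rw [cos_sub_cos, show ((2 * n + 1) * t / 2 - (2 * n + 3) * t / 2) / 2 = -(t / 2) by ring,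
        show ((2 * n + 1) * t / 2 + (2 * n + 3) * t / 2) / 2 = (n + 1) * t by ring, sin_neg]
      ring
    rw [Finset.sum_range_succ, add_mul, ih, ← hstep]
    push_cast
    ring_nf

section PathGraph

variable {n : ℕ}

/-- `x₁, …, xₙ` stored as `x 0, …, x (n-1)`, padded with zeros: `x₀ = x_{n+1} = 0`. -/
def dirichletExt (x : Fin n → ℝ) (k : ℕ) : ℝ := ∑ j : Fin n, if (j : ℕ) + 1 = k then x j else 0

lemma dirichletExt_succ (x : Fin n → ℝ) (i : Fin n) : dirichletExt x (i + 1) = x i := by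
  simp [dirichletExt, Fin.val_inj]

@[simp] lemma dirichletExt_zero (x : Fin n → ℝ) : dirichletExt x 0 = 0 := by
  simp [dirichletExt]

lemma dirichletExt_of_lt {x : Fin n → ℝ} {k : ℕ} (hk : n < k) : dirichletExt x k = 0 :=
  Finset.sum_eq_zero fun j _ => if_neg (by omega)

noncomputable def pathVec (n : ℕ) (μ : ℝ) : Fin n → ℝ := fun i => pathSeq μ (i + 1)

lemma sum_pathVec (μ : ℝ) : ∑ i, pathVec n μ i = ∑ k ∈ Finset.range n, pathSeq μ (k + 1) :=
  Fin.sum_univ_eq_sum_range (fun k => pathSeq μ (k + 1)) n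

lemma pathVec_ne_zero {μ : ℝ} (hμ : pathSeq μ (n + 1) = 0) : pathVec n μ ≠ 0 := by
  obtain _ | n := n
  · simp at hμ
  · exact fun h => by simpa [pathVec] using congrFun h 0

lemma dirichletExt_pathVec {μ : ℝ} (hμ : pathSeq μ (n + 1) = 0) {k : ℕ} (hk : k ≤ n + 1) :
    dirichletExt (pathVec n μ) k = pathSeq μ k := by
  rcases Nat.eq_zero_or_pos k with rfl | hk₀
  · simp
  rcases hk.lt_or_eq with hk | rfl
  · obtain ⟨j, rfl⟩ := Nat.exists_eq_add_of_le' hk₀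
    exact dirichletExt_succ (pathVec n μ) ⟨j, by omega⟩
  · rw [hμ, dirichletExt_of_lt (by omega)]

variable [DecidableRel (pathGraph n).Adj]

lemma adjMatrix_pathGraph_mulVec_apply (x : Fin n → ℝ) (i : Fin n) :
    ((pathGraph n).adjMatrix ℝ *ᵥ x) i = dirichletExt x i + dirichletExt x (i + 2) := by
  simp only [dirichletExt, ← Finset.sum_add_distrib, mulVec, dotProduct, adjMatrix_apply,
    ite_mul, one_mul, zero_mul, pathGraph_adj]
  refine Finset.sum_congr rfl fun j _ => ?_
  split_ifs <;> first | omega | simp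

lemma dirichletExt_add_dirichletExt_of_mulVec_eq {x : Fin n → ℝ} {μ : ℝ}
    (hx : (pathGraph n).adjMatrix ℝ *ᵥ x = μ • x) {k : ℕ} (hk : k < n) :
    dirichletExt x k + dirichletExt x (k + 2) = μ * dirichletExt x (k + 1) := by
  have h := congrFun hx ⟨k, hk⟩
  rwa [adjMatrix_pathGraph_mulVec_apply, Pi.smul_apply, smul_eq_mul,
    ← dirichletExt_succ x ⟨k, hk⟩] at h

lemma dirichletExt_eq_mul_pathSeq {x : Fin n → ℝ} {μ : ℝ}
    (hx : (pathGraph n).adjMatrix ℝ *ᵥ x = μ • x) (k : ℕ) (hk : k ≤ n + 1) :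
    dirichletExt x k = dirichletExt x 1 * pathSeq μ k := by
  induction k using Nat.twoStepInduction with
  | zero => simp
  | one => simp
  | more k ih₀ ih₁ =>
    have hrec := dirichletExt_add_dirichletExt_of_mulVec_eq hx (k := k) (by omega)
    rw [pathSeq_add_two]
    linear_combination hrec + μ * ih₁ (by omega) - ih₀ (by omega)

lemma sum_eq_mul_sum_pathSeq {x : Fin n → ℝ} {μ : ℝ}
    (hx : (pathGraph n).adjMatrix ℝ *ᵥ x = μ • x) :
    ∑ i, x i = dirichletExt x 1 * ∑ k ∈ Finset.range n, pathSeq μ (k + 1) := by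
  rw [Finset.mul_sum, ← Fin.sum_univ_eq_sum_range (fun k => dirichletExt x 1 * pathSeq μ (k + 1))]
  refine Finset.sum_congr rfl fun i _ => ?_
  rw [← dirichletExt_eq_mul_pathSeq hx _ (by omega), dirichletExt_succ]

lemma eq_zero_of_mulVec_eq_of_dirichletExt_one_eq_zero {x : Fin n → ℝ} {μ : ℝ}
    (hx : (pathGraph n).adjMatrix ℝ *ᵥ x = μ • x) (h₁ : dirichletExt x 1 = 0) : x = 0 := by
  ext i
  rw [← dirichletExt_succ x i, dirichletExt_eq_mul_pathSeq hx _ (by omega), h₁, zero_mul,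
    Pi.zero_apply]

lemma mulVec_pathVec {μ : ℝ} (hμ : pathSeq μ (n + 1) = 0) :
    (pathGraph n).adjMatrix ℝ *ᵥ pathVec n μ = μ • pathVec n μ := by
  ext i
  rw [adjMatrix_pathGraph_mulVec_apply, dirichletExt_pathVec hμ (by omega),
    dirichletExt_pathVec hμ (by omega), Pi.smul_apply, smul_eq_mul, pathVec, pathSeq_add_two]
  ring

theorem isEigenvalue_pathGraph_iff {μ : ℝ} :
    (pathGraph n).IsEigenvalue μ ↔ pathSeq μ (n + 1) = 0 := by
  constructor
  · rintro ⟨x, hx₀, hx⟩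
    have h₁ : dirichletExt x 1 ≠ 0 := fun h =>
      hx₀ (eq_zero_of_mulVec_eq_of_dirichletExt_one_eq_zero hx h)
    have h := dirichletExt_eq_mul_pathSeq hx (n + 1) le_rfl
    rw [dirichletExt_of_lt (by omega)] at h
    exact (mul_eq_zero.1 h.symm).resolve_left h₁
  · exact fun hμ => ⟨pathVec n μ, pathVec_ne_zero hμ, mulVec_pathVec hμ⟩

theorem isNonMainEigenvalue_pathGraph_iff {μ : ℝ} :
    (pathGraph n).IsNonMainEigenvalue μ ↔
      pathSeq μ (n + 1) = 0 ∧ ∑ k ∈ Finset.range n, pathSeq μ (k + 1) = 0 := by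
  rw [IsNonMainEigenvalue, isEigenvalue_pathGraph_iff, IsMainEigenvalue]
  refine and_congr_right fun hμ => ⟨fun hmain => ?_, fun hsum => ?_⟩
  · by_contra hsum
    exact hmain ⟨pathVec n μ, pathVec_ne_zero hμ, mulVec_pathVec hμ, by rwa [sum_pathVec]⟩
  · rintro ⟨x, -, hx, hx_sum⟩
    exact hx_sum (by rw [sum_eq_mul_sum_pathSeq hx, hsum, mul_zero])

end PathGraph

lemma sin_ne_zero_of_nat_mul_pi_lt {x : ℝ} {n : ℕ} (h₁ : n * π < x) (h₂ : x < (n + 1) * π) :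
    sin x ≠ 0 := by
  have h := sin_pos_of_pos_of_lt_pi (sub_pos.2 h₁) (by linarith)
  rw [sin_sub_nat_mul_pi] at h
  exact fun h₀ => by simp [h₀] at h

lemma nat_mul_pi_div_succ_mem_Ioo {n : ℕ} (hn : 0 < n) : n * π / (n + 1) ∈ Set.Ioo 0 π := by
  have hn' : (0 : ℝ) < n := Nat.cast_pos.2 hn
  refine ⟨by positivity, ?_⟩
  rw [div_lt_iff₀ (by positivity)]
  nlinarith [pi_pos]

theorem isLeast_eigenvalue_pathGraph {n : ℕ} [DecidableRel (pathGraph n).Adj] (hn : 0 < n) :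
    IsLeast {μ | (pathGraph n).IsEigenvalue μ} (2 * cos (n * π / (n + 1))) := by
  set t₀ := n * π / (n + 1)
  obtain ⟨ht₀_pos, ht₀_lt⟩ := nat_mul_pi_div_succ_mem_Ioo hn
  have ht₀ : (n + 1) * t₀ = n * π := mul_div_cancel₀ _ (by positivity)
  refine ⟨isEigenvalue_pathGraph_iff.2 ?_, fun μ hμ => ?_⟩
  · have h := pathSeq_two_mul_cos_mul_sin t₀ (n + 1)
    rw [Nat.cast_succ, ht₀, sin_nat_mul_pi] at h
    exact (mul_eq_zero.1 h).resolve_right (sin_pos_of_pos_of_lt_pi ht₀_pos ht₀_lt).ne'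
  replace hμ : pathSeq μ (n + 1) = 0 := isEigenvalue_pathGraph_iff.1 hμ
  by_contra! hlt
  rcases le_or_gt μ (-2) with hμ₂ | hμ₂
  · have h := le_neg_one_pow_mul_pathSeq hμ₂ (n + 1)
    rw [hμ, mul_zero] at h
    push_cast at h
    linarith
  set t := arccos (μ / 2)
  have hμt : 2 * cos t = μ := by
    rw [cos_arccos (by linarith) (by linarith [cos_le_one t₀])]
    ring
  have ht₀t : t₀ < t := by
    by_contra! h
    linarith [cos_le_cos_of_nonneg_of_le_pi (arccos_nonneg _) ht₀_lt.le h]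
  have htπ : t < π := arccos_lt_pi.2 (by linarith)
  have h := pathSeq_two_mul_cos_mul_sin t (n + 1)
  rw [hμt, hμ, zero_mul, Nat.cast_succ] at h
  exact sin_ne_zero_of_nat_mul_pi_lt (by nlinarith) (by nlinarith) h.symm

theorem sum_pathSeq_eq_zero_iff_even {n : ℕ} (hn : 0 < n) :
    ∑ k ∈ Finset.range n, pathSeq (2 * cos (n * π / (n + 1))) (k + 1) = 0 ↔ Even n := by
  set t₀ := n * π / (n + 1)
  obtain ⟨ht₀_pos, ht₀_lt⟩ := nat_mul_pi_div_succ_mem_Ioo hn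
  have ht₀ : (n + 1) * t₀ = n * π := mul_div_cancel₀ _ (by positivity)
  have hsin : 0 < sin t₀ := sin_pos_of_pos_of_lt_pi ht₀_pos ht₀_lt
  have hsin_half : 0 < sin (t₀ / 2) := sin_pos_of_pos_of_lt_pi (by linarith) (by linarith)
  have hcos_half : 0 < cos (t₀ / 2) := cos_pos_of_mem_Ioo ⟨by linarith, by linarith⟩
  have key : (∑ k ∈ Finset.range n, pathSeq (2 * cos t₀) (k + 1)) *
      (sin t₀ * (2 * sin (t₀ / 2))) = (1 - (-1) ^ n) * cos (t₀ / 2) := by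
    have hsum : (∑ k ∈ Finset.range n, pathSeq (2 * cos t₀) (k + 1)) * sin t₀ =
        ∑ k ∈ Finset.range n, sin ((k + 1) * t₀) := by
      rw [Finset.sum_mul]
      refine Finset.sum_congr rfl fun k _ => ?_
      rw [pathSeq_two_mul_cos_mul_sin, Nat.cast_succ]
    rw [← mul_assoc, hsum, sum_sin_mul_two_sin_half,
      show (2 * n + 1) * t₀ / 2 = n * π - t₀ / 2 by linear_combination ht₀, cos_nat_mul_pi_sub]
    ring
  calc _ ↔ (1 - (-1) ^ n) * cos (t₀ / 2) = 0 := by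
        rw [← key, mul_eq_zero_iff_right (mul_pos hsin (by linarith)).ne']
    _ ↔ (-1 : ℝ) ^ n = 1 := by rw [mul_eq_zero_iff_right hcos_half.ne', sub_eq_zero, eq_comm]
    _ ↔ Even n := neg_one_pow_eq_one_iff_even (by norm_num)

theorem path_min_nonmain_iff_even {n : ℕ} (hn : 2 ≤ n)
    [DecidableRel (SimpleGraph.pathGraph n).Adj]
    (lamn : ℝ)
    (hmin : IsLeast {μ | (SimpleGraph.pathGraph n).IsEigenvalue μ} lamn) :
    (SimpleGraph.pathGraph n).IsNonMainEigenvalue lamn ↔ Even n := by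
  have hn₀ : 0 < n := by omega
  obtain rfl := hmin.unique (isLeast_eigenvalue_pathGraph hn₀)
  rw [isNonMainEigenvalue_pathGraph_iff, ← sum_pathSeq_eq_zero_iff_even hn₀]
  exact and_iff_right (isEigenvalue_pathGraph_iff.1 hmin.1)
end

section
/- Let T = T(k,s) be a double star on n = k + s + 2 vertices. The least eigenvalue of T is non-main if and only if k = s (i.e., T is balanced). -/
open Matrix Finset Polynomial

variable {V : Type*} [Fintype V] [DecidableEq V]

/-- The double star `T(k,s)`: two adjacent centers, the first with `k` pendant
vertices and the second with `s` pendant vertices. -/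
def doubleStar (k s : ℕ) : SimpleGraph (Fin 2 ⊕ (Fin k ⊕ Fin s)) :=
  SimpleGraph.fromRel (fun a b =>
    match a, b with
    | Sum.inl _, Sum.inl _ => True
    | Sum.inl u, Sum.inr (Sum.inl _) => u = 0
    | Sum.inl u, Sum.inr (Sum.inr _) => u = 1
    | _, _ => False)

/-!
For `μ ≠ 0` an eigenvector `x` of `T(k,s)` is determined by its values `p, q` at the two centres:
every pendant vertex carries `p / μ` or `q / μ`. These satisfy `(μ² - k) p = μ q`,
`(μ² - s) q = μ p` and `μ ∑ x = (μ + k) p + (μ + s) q`, and conversely every root of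
`μ⁴ - (k + s + 1) μ² + k s` is an eigenvalue. This quartic has a negative root, so the least
eigenvalue `λ` is negative. If `∑ x = 0`, eliminating `q` resp. `p` with the two centre relations
gives `(s - k) λ² p q = 0`, so `k = s`. If `k = s`, adding and subtracting the centre relations
shows that either `p + q = 0`, whence `∑ x = 0`, or `λ² - λ - k = 0`; in the latter case `λ - 1`
is a root of the quartic too, contradicting minimality.
-/

section DoubleStar

variable {k s : ℕ} [DecidableRel (doubleStar k s).Adj]

lemma doubleStar_adjMatrix_mulVec_inl_zero (x : Fin 2 ⊕ (Fin k ⊕ Fin s) → ℝ) :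
    ((doubleStar k s).adjMatrix ℝ *ᵥ x) (Sum.inl 0)
      = ∑ i : Fin k, x (Sum.inr (Sum.inl i)) + x (Sum.inl 1) := by
  simp only [mulVec, dotProduct, Fintype.sum_sum_type, Fin.sum_univ_two, SimpleGraph.adjMatrix_apply]
  simp [doubleStar, add_comm]

lemma doubleStar_adjMatrix_mulVec_inl_one (x : Fin 2 ⊕ (Fin k ⊕ Fin s) → ℝ) :
    ((doubleStar k s).adjMatrix ℝ *ᵥ x) (Sum.inl 1)
      = ∑ j : Fin s, x (Sum.inr (Sum.inr j)) + x (Sum.inl 0) := by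
  simp only [mulVec, dotProduct, Fintype.sum_sum_type, Fin.sum_univ_two, SimpleGraph.adjMatrix_apply]
  simp [doubleStar, add_comm]

lemma doubleStar_adjMatrix_mulVec_inr_inl (x : Fin 2 ⊕ (Fin k ⊕ Fin s) → ℝ) (i : Fin k) :
    ((doubleStar k s).adjMatrix ℝ *ᵥ x) (Sum.inr (Sum.inl i)) = x (Sum.inl 0) := by
  simp only [mulVec, dotProduct, Fintype.sum_sum_type, Fin.sum_univ_two, SimpleGraph.adjMatrix_apply]
  simp [doubleStar]

lemma doubleStar_adjMatrix_mulVec_inr_inr (x : Fin 2 ⊕ (Fin k ⊕ Fin s) → ℝ) (j : Fin s) :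
    ((doubleStar k s).adjMatrix ℝ *ᵥ x) (Sum.inr (Sum.inr j)) = x (Sum.inl 1) := by
  simp only [mulVec, dotProduct, Fintype.sum_sum_type, Fin.sum_univ_two, SimpleGraph.adjMatrix_apply]
  simp [doubleStar]

lemma doubleStar_eigenvector_inr_inl {μ : ℝ} {x : Fin 2 ⊕ (Fin k ⊕ Fin s) → ℝ}
    (hx : (doubleStar k s).adjMatrix ℝ *ᵥ x = μ • x) (i : Fin k) :
    μ * x (Sum.inr (Sum.inl i)) = x (Sum.inl 0) := by
  rw [← doubleStar_adjMatrix_mulVec_inr_inl x i, hx, Pi.smul_apply, smul_eq_mul]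

lemma doubleStar_eigenvector_inr_inr {μ : ℝ} {x : Fin 2 ⊕ (Fin k ⊕ Fin s) → ℝ}
    (hx : (doubleStar k s).adjMatrix ℝ *ᵥ x = μ • x) (j : Fin s) :
    μ * x (Sum.inr (Sum.inr j)) = x (Sum.inl 1) := by
  rw [← doubleStar_adjMatrix_mulVec_inr_inr x j, hx, Pi.smul_apply, smul_eq_mul]

lemma doubleStar_eigenvector_center_relations {μ : ℝ} {x : Fin 2 ⊕ (Fin k ⊕ Fin s) → ℝ}
    (hx : (doubleStar k s).adjMatrix ℝ *ᵥ x = μ • x) :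
    μ ^ 2 * x (Sum.inl 0) = k * x (Sum.inl 0) + μ * x (Sum.inl 1) ∧
    μ ^ 2 * x (Sum.inl 1) = s * x (Sum.inl 1) + μ * x (Sum.inl 0) ∧
    μ * ∑ v, x v = (μ + k) * x (Sum.inl 0) + (μ + s) * x (Sum.inl 1) := by
  have sum₀ : μ * ∑ i : Fin k, x (Sum.inr (Sum.inl i)) = k * x (Sum.inl 0) := by
    simp [Finset.mul_sum, doubleStar_eigenvector_inr_inl hx]
  have sum₁ : μ * ∑ j : Fin s, x (Sum.inr (Sum.inr j)) = s * x (Sum.inl 1) := by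
    simp [Finset.mul_sum, doubleStar_eigenvector_inr_inr hx]
  have center₀ : ∑ i : Fin k, x (Sum.inr (Sum.inl i)) + x (Sum.inl 1) = μ * x (Sum.inl 0) := by
    rw [← doubleStar_adjMatrix_mulVec_inl_zero, hx, Pi.smul_apply, smul_eq_mul]
  have center₁ : ∑ j : Fin s, x (Sum.inr (Sum.inr j)) + x (Sum.inl 0) = μ * x (Sum.inl 1) := by
    rw [← doubleStar_adjMatrix_mulVec_inl_one, hx, Pi.smul_apply, smul_eq_mul]
  simp only [Fintype.sum_sum_type, Fin.sum_univ_two]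
  refine ⟨?_, ?_, ?_⟩
  · linear_combination -μ * center₀ + sum₀
  · linear_combination -μ * center₁ + sum₁
  · linear_combination sum₀ + sum₁

lemma doubleStar_eigenvector_centers_ne_zero {μ : ℝ} (hμ : μ ≠ 0)
    {x : Fin 2 ⊕ (Fin k ⊕ Fin s) → ℝ} (hx₀ : x ≠ 0)
    (hx : (doubleStar k s).adjMatrix ℝ *ᵥ x = μ • x) :
    x (Sum.inl 0) ≠ 0 ∧ x (Sum.inl 1) ≠ 0 := by
  obtain ⟨center₀, center₁, -⟩ := doubleStar_eigenvector_center_relations hx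
  suffices x (Sum.inl 0) = 0 ∨ x (Sum.inl 1) = 0 → x = 0 by tauto
  intro h
  obtain ⟨h₀, h₁⟩ : x (Sum.inl 0) = 0 ∧ x (Sum.inl 1) = 0 := by
    rcases h with h | h <;> rw [h] at center₀ center₁ <;> simp_all
  funext v
  rcases v with u | i | j
  · obtain rfl | rfl : u = 0 ∨ u = 1 := by omega
    exacts [h₀, h₁]
  · simpa [h₀, hμ] using doubleStar_eigenvector_inr_inl hx i
  · simpa [h₁, hμ] using doubleStar_eigenvector_inr_inr hx j

lemma doubleStar_isEigenvalue_of_quartic {μ : ℝ} (hμ : μ ≠ 0)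
    (h : μ ^ 4 - (k + s + 1) * μ ^ 2 + k * s = 0) : (doubleStar k s).IsEigenvalue μ := by
  refine ⟨Sum.elim ![μ ^ 2, μ * (μ ^ 2 - k)] (Sum.elim (fun _ => μ) (fun _ => μ ^ 2 - k)),
    fun h0 => hμ (pow_eq_zero_iff two_ne_zero |>.mp (congrFun h0 (Sum.inl 0))), ?_⟩
  funext v
  rcases v with u | i | j
  · obtain rfl | rfl : u = 0 ∨ u = 1 := by omega
    · rw [Pi.smul_apply, doubleStar_adjMatrix_mulVec_inl_zero]
      simp only [Sum.elim_inl, Sum.elim_inr, cons_val_zero, cons_val_one, cons_val_fin_one, sum_const,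
        card_univ, Fintype.card_fin, nsmul_eq_mul, smul_eq_mul]
      ring
    · rw [Pi.smul_apply, doubleStar_adjMatrix_mulVec_inl_one]
      simp only [Sum.elim_inl, Sum.elim_inr, cons_val_zero, cons_val_one, cons_val_fin_one, sum_const,
        card_univ, Fintype.card_fin, nsmul_eq_mul, smul_eq_mul]
      linear_combination -h
  · rw [Pi.smul_apply, doubleStar_adjMatrix_mulVec_inr_inl]
    simp only [Sum.elim_inl, Sum.elim_inr, cons_val_zero, smul_eq_mul]
    ring
  · rw [Pi.smul_apply, doubleStar_adjMatrix_mulVec_inr_inr]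
    simp only [Sum.elim_inl, Sum.elim_inr, cons_val_one, cons_val_fin_one, smul_eq_mul]

lemma doubleStar_eq_of_eigenvector_sum_eq_zero {μ : ℝ} (hμ : μ ≠ 0)
    {x : Fin 2 ⊕ (Fin k ⊕ Fin s) → ℝ} (hx₀ : x ≠ 0)
    (hx : (doubleStar k s).adjMatrix ℝ *ᵥ x = μ • x) (hsum : ∑ v, x v = 0) : k = s := by
  obtain ⟨hp, hq⟩ := doubleStar_eigenvector_centers_ne_zero hμ hx₀ hx
  obtain ⟨center₀, center₁, hμsum⟩ := doubleStar_eigenvector_center_relations hx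
  set p := x (Sum.inl 0)
  set q := x (Sum.inl 1)
  rw [hsum, mul_zero] at hμsum
  have key : ((s : ℝ) - k) * μ ^ 2 * (p * q) = 0 := by
    linear_combination (μ * (p - q)) * hμsum + q * (μ + s) * center₀ - p * (μ + k) * center₁
  have : (s : ℝ) - k = 0 := by simpa [hμ, hp, hq] using key
  exact_mod_cast (sub_eq_zero.mp this).symm

end DoubleStar

lemma doubleStar_exists_neg_isEigenvalue (k s : ℕ) [DecidableRel (doubleStar k s).Adj] :
    ∃ μ < 0, (doubleStar k s).IsEigenvalue μ := by
  set f : ℝ → ℝ := fun t => t ^ 2 - (k + s + 1) * t + k * s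
  -- `f (k + 1) = -s ≤ 0 ≤ k s = f (k + s + 1)`
  obtain ⟨t, ⟨ht, -⟩, hft⟩ : (0 : ℝ) ∈ f '' Set.Icc (k + 1) (k + s + 1) := by
    refine intermediate_value_Icc (by linarith [(s.cast_nonneg : (0 : ℝ) ≤ s)])
      (by fun_prop) ⟨?_, ?_⟩ <;> simp only [f] <;> nlinarith [(s.cast_nonneg : (0 : ℝ) ≤ s),
        (k.cast_nonneg : (0 : ℝ) ≤ k)]
  have ht₀ : 0 < t := by linarith [(k.cast_nonneg : (0 : ℝ) ≤ k)]
  have hsqrt : 0 < √t := Real.sqrt_pos.mpr ht₀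
  have hsq : (-√t) ^ 2 = t := by rw [neg_sq, Real.sq_sqrt ht₀.le]
  refine ⟨-√t, neg_neg_of_pos hsqrt, doubleStar_isEigenvalue_of_quartic (neg_ne_zero.mpr hsqrt.ne') ?_⟩
  rw [show (-√t) ^ 4 = ((-√t) ^ 2) ^ 2 by ring, hsq]
  exact hft

section Balanced

variable {k : ℕ} [DecidableRel (doubleStar k k).Adj]

lemma doubleStar_self_eigenvector_sum_eq_zero {μ : ℝ} (hμ : μ ≠ 0)
    (hroot : μ ^ 2 - μ - k ≠ 0) {x : Fin 2 ⊕ (Fin k ⊕ Fin k) → ℝ}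
    (hx : (doubleStar k k).adjMatrix ℝ *ᵥ x = μ • x) : ∑ v, x v = 0 := by
  obtain ⟨center₀, center₁, hμsum⟩ := doubleStar_eigenvector_center_relations hx
  have hpq : (μ ^ 2 - μ - k) * (x (Sum.inl 0) + x (Sum.inl 1)) = 0 := by
    linear_combination center₀ + center₁
  have hpq' : x (Sum.inl 0) + x (Sum.inl 1) = 0 := by simpa [hroot] using hpq
  have : μ * ∑ v, x v = 0 := by linear_combination hμsum + (μ + k) * hpq'
  simpa [hμ] using this

lemma doubleStar_self_isEigenvalue_sub_one {μ : ℝ} (hroot : μ ^ 2 - μ - k = 0) (hμ : μ ≠ 1) :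
    (doubleStar k k).IsEigenvalue (μ - 1) :=
  doubleStar_isEigenvalue_of_quartic (sub_ne_zero.mpr hμ) <| by
    linear_combination ((μ - 1) ^ 2 - k - (μ - 1)) * hroot

end Balanced

theorem doubleStar_min_nonmain_iff_balanced_general (k s : ℕ)
    [DecidableRel (doubleStar k s).Adj]
    (lamn : ℝ)
    (hmin : IsLeast {μ | (doubleStar k s).IsEigenvalue μ} lamn) :
    (doubleStar k s).IsNonMainEigenvalue lamn ↔ k = s := by
  have hneg : lamn < 0 := by
    obtain ⟨μ, hμ, hμeig⟩ := doubleStar_exists_neg_isEigenvalue k s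
    exact (hmin.2 hμeig).trans_lt hμ
  constructor
  · rintro ⟨⟨x, hx₀, hx⟩, hnonmain⟩
    exact doubleStar_eq_of_eigenvector_sum_eq_zero hneg.ne hx₀ hx
      (not_not.mp fun hsum => hnonmain ⟨x, hx₀, hx, hsum⟩)
  · rintro rfl
    refine ⟨hmin.1, fun ⟨x, _, hx, hsum⟩ => hsum ?_⟩
    refine doubleStar_self_eigenvector_sum_eq_zero hneg.ne (fun hroot => ?_) hx
    have := hmin.2 (doubleStar_self_isEigenvalue_sub_one hroot (by linarith))
    linarith

theorem doubleStar_min_nonmain_iff_balanced (k s : ℕ) (hk : 1 ≤ k) (hs : 1 ≤ s)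
    [DecidableRel (doubleStar k s).Adj]
    (lamn : ℝ)
    (hmin : IsLeast {μ | (doubleStar k s).IsEigenvalue μ} lamn) :
    (doubleStar k s).IsNonMainEigenvalue lamn ↔ k = s :=
  doubleStar_min_nonmain_iff_balanced_general k s lamn hmin
end
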